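/- arXiv:2409.15793 — 3 statements merged into one kernel-verified Lean document; each statement's English description precedes it below -/
import Mathlib

section
/- Let n ≥ 3 and let ℓ be the left-to-right labeling of the fan graph F_n. For every spanning tree T of F_n and every edge exchange {e, f} for T with ℓ(e) < ℓ(f), there exists an edge d of F_n with ℓ(d) < ℓ(f) such that d and f share an end vertex, exactly one of d, f belongs to T, and T △ {d, f} is again a spanning tree of F_n. -/
/-- `T` is (the edge set of) a spanning tree of the simple graph `G`:
a set of edges of `G` forming a connected and acyclic spanning subgraph. -/
def IsSpanningTree {V : Type*} (G : SimpleGraph V) (T : Finset (Sym2 V)) : Prop :=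
  ↑T ⊆ G.edgeSet ∧ (SimpleGraph.fromEdgeSet (↑T : Set (Sym2 V))).Connected ∧
    (SimpleGraph.fromEdgeSet (↑T : Set (Sym2 V))).IsAcyclic

/-- The fan graph `F_n` on vertex set `{0, 1, …, n-1}`, with spoke edges `{0, i}` for
`1 ≤ i ≤ n-1` and path edges `{i, i+1}` for `1 ≤ i ≤ n-2`. -/
def fanGraph (n : ℕ) : SimpleGraph (Fin n) :=
  SimpleGraph.fromRel (fun u v => u.val = 0 ∨ u.val + 1 = v.val)

/-- `{e, f}` is an edge exchange for the spanning tree `T` of `G`: both are edges of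
`G`, exactly one of them belongs to `T`, and `T △ {e, f}` is again a spanning tree. -/
def IsEdgeExchange {V : Type*} [DecidableEq V] (G : SimpleGraph V)
    (T : Finset (Sym2 V)) (e f : Sym2 V) : Prop :=
  e ∈ G.edgeSet ∧ f ∈ G.edgeSet ∧ e ≠ f ∧ (e ∈ T ↔ f ∉ T) ∧
    IsSpanningTree G (symmDiff T {e, f})

set_option linter.unusedSectionVars false

open SimpleGraph

section FanPivotHelpers
variable {V : Type*} [DecidableEq V]

lemma fp_getVert_mem_support {G : SimpleGraph V} {a b : V} (w : G.Walk a b) (t : ℕ) :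
    w.getVert t ∈ w.support := by
  induction w generalizing t with
  | nil => cases t <;> simp [SimpleGraph.Walk.getVert]
  | cons h p ih =>
    cases t with
    | zero => simp [SimpleGraph.Walk.getVert]
    | succ t =>
      rw [SimpleGraph.Walk.getVert_cons_succ, SimpleGraph.Walk.support_cons]
      exact List.mem_cons_of_mem _ (ih t)

lemma fp_reach_of_walk_sides (A : Set (Sym2 V)) (g : Sym2 V) {x y : V}
    (w : (fromEdgeSet A).Walk x y) :
    (fromEdgeSet (A \ {g})).Reachable x y ∨
      ∃ p, p ∈ g ∧ (fromEdgeSet (A \ {g})).Reachable x p := by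
  induction w with
  | nil => exact Or.inl (Reachable.refl _)
  | @cons a b c h p ih =>
    by_cases hg : s(a, b) = g
    · exact Or.inr ⟨a, by rw [← hg]; exact Sym2.mem_mk_left a b, Reachable.refl _⟩
    · rw [fromEdgeSet_adj] at h
      have hab : (fromEdgeSet (A \ {g})).Adj a b :=
        (fromEdgeSet_adj _).mpr ⟨⟨h.1, hg⟩, h.2⟩
      rcases ih with h' | ⟨p', hp', h'⟩
      · exact Or.inl (hab.reachable.trans h')
      · exact Or.inr ⟨p', hp', hab.reachable.trans h'⟩

lemma fp_contract {B : Set (Sym2 V)} {p q x y : V} (hpq : (fromEdgeSet B).Reachable p q)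
    (hxy : (fromEdgeSet (B ∪ {s(p, q)})).Reachable x y) : (fromEdgeSet B).Reachable x y := by
  obtain ⟨w⟩ := hxy
  induction w with
  | nil => exact Reachable.refl _
  | @cons a b c h p' ih =>
    refine Reachable.trans ?_ ih
    rw [fromEdgeSet_adj] at h
    rcases h.1 with hB | hg
    · exact ((fromEdgeSet_adj _).mpr ⟨hB, h.2⟩).reachable
    · rw [Set.mem_singleton_iff, Sym2.eq_iff] at hg
      rcases hg with ⟨rfl, rfl⟩ | ⟨rfl, rfl⟩
      · exact hpq
      · exact hpq.symm

lemma fp_sdiff_graph (A : Set (Sym2 V)) (g : Sym2 V) :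
    fromEdgeSet A \ fromEdgeSet {g} = fromEdgeSet (A \ {g}) := by
  ext u v
  simp only [sdiff_adj, fromEdgeSet_adj, Set.mem_diff, Set.mem_singleton_iff]
  tauto

lemma fp_bridge {A : Set (Sym2 V)} (hac : (fromEdgeSet A).IsAcyclic) {a b : V}
    (hab : s(a, b) ∈ A) (hne : a ≠ b) :
    ¬ (fromEdgeSet (A \ {s(a, b)})).Reachable a b := by
  have hadj : (fromEdgeSet A).Adj a b := (fromEdgeSet_adj _).mpr ⟨hab, hne⟩
  have h := (isAcyclic_iff_forall_adj_isBridge.mp hac) hadj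
  rw [isBridge_iff, deleteEdges, fp_sdiff_graph] at h
  exact h

lemma fp_acyclic_mono {G H : SimpleGraph V} (h : G ≤ H) (hH : H.IsAcyclic) : G.IsAcyclic := by
  intro v c hc
  exact hH (c.transfer H (fun e he => edgeSet_mono h (c.edges_subset_edgeSet he)))
    (hc.transfer _)

lemma fp_transfer_away {A : Set (Sym2 V)} {g : Sym2 V} {x y : V}
    (P : (fromEdgeSet A).Walk x y) (hg : g ∉ P.edges) :
    (fromEdgeSet (A \ {g})).Reachable x y := by
  refine ⟨P.transfer _ ?_⟩
  intro e he
  have h1 := P.edges_subset_edgeSet he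
  rw [edgeSet_fromEdgeSet] at h1 ⊢
  refine ⟨⟨h1.1, ?_⟩, h1.2⟩
  intro hh
  rw [Set.mem_singleton_iff] at hh
  exact hg (hh ▸ he)

lemma fp_acyclic_union (A : Set (Sym2 V)) (hac : (fromEdgeSet A).IsAcyclic) {u v : V}
    (hne : u ≠ v) (hnr : ¬ (fromEdgeSet A).Reachable u v) :
    (fromEdgeSet (A ∪ {s(u, v)})).IsAcyclic := by
  have hbridge : (fromEdgeSet (A ∪ {s(u, v)})).IsBridge s(u, v) := by
    rw [isBridge_iff]
    rw [deleteEdges]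
    rw [fp_sdiff_graph]
    intro hr
    apply hnr
    refine hr.mono (fromEdgeSet_mono ?_)
    rintro x ⟨h1, h2⟩
    rcases h1 with h1 | h1
    · exact h1
    · exact absurd h1 h2
  intro w c hc
  by_cases hmem : s(u, v) ∈ c.edges
  · exact ((isBridge_iff_adj_and_forall_cycle_notMem (c.edges_subset_edgeSet hmem)).mp hbridge) c hc hmem
  · have hsub : ∀ e ∈ c.edges, e ∈ (fromEdgeSet A).edgeSet := by
      intro e he
      have h1 := c.edges_subset_edgeSet he
      rw [edgeSet_fromEdgeSet] at h1 ⊢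
      rcases h1 with ⟨h1 | h1, h2⟩
      · exact ⟨h1, h2⟩
      · rw [Set.mem_singleton_iff] at h1
        exact absurd (h1 ▸ he) hmem
    exact hac (c.transfer _ hsub) (hc.transfer hsub)

lemma fp_swap (A : Set (Sym2 V)) [Nonempty V] (hc : (fromEdgeSet A).Connected)
    (hac : (fromEdgeSet A).IsAcyclic) {p q : V} (hpq : p ≠ q) (hg : s(p, q) ∈ A)
    {u v : V} (huv : u ≠ v)
    (hnr : ¬ (fromEdgeSet (A \ {s(p, q)})).Reachable u v) :
    (fromEdgeSet ((A \ {s(p, q)}) ∪ {s(u, v)})).Connected ∧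
      (fromEdgeSet ((A \ {s(p, q)}) ∪ {s(u, v)})).IsAcyclic := by
  set A' := A \ {s(p, q)} with hA'
  have hle : fromEdgeSet A' ≤ fromEdgeSet (A' ∪ {s(u, v)}) :=
    fromEdgeSet_mono Set.subset_union_left
  have side : ∀ x, (fromEdgeSet A').Reachable x p ∨ (fromEdgeSet A').Reachable x q := by
    intro x
    obtain ⟨w⟩ := hc.preconnected x p
    rcases fp_reach_of_walk_sides A s(p, q) w with h | ⟨r, hr, h⟩
    · exact Or.inl h
    · rw [Sym2.mem_iff] at hr
      rcases hr with rfl | rfl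
      · exact Or.inl h
      · exact Or.inr h
  have hadj2 : (fromEdgeSet (A' ∪ {s(u, v)})).Adj u v :=
    (fromEdgeSet_adj _).mpr ⟨Or.inr rfl, huv⟩
  have horient : ((fromEdgeSet A').Reachable u p ∧ (fromEdgeSet A').Reachable v q) ∨
      ((fromEdgeSet A').Reachable u q ∧ (fromEdgeSet A').Reachable v p) := by
    rcases side u with h1 | h1 <;> rcases side v with h2 | h2
    · exact absurd (h1.trans h2.symm) hnr
    · exact Or.inl ⟨h1, h2⟩
    · exact Or.inr ⟨h1, h2⟩
    · exact absurd (h1.trans h2.symm) hnr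
  have key : ∀ x, (fromEdgeSet (A' ∪ {s(u, v)})).Reachable x u := by
    intro x
    rcases horient with ⟨h1, h2⟩ | ⟨h1, h2⟩ <;> rcases side x with hx | hx
    · exact ((hx.mono hle).trans ((h1.mono hle).symm))
    · exact ((hx.mono hle).trans ((h2.mono hle).symm)).trans hadj2.symm.reachable
    · exact ((hx.mono hle).trans ((h2.mono hle).symm)).trans hadj2.symm.reachable
    · exact ((hx.mono hle).trans ((h1.mono hle).symm))
  refine ⟨⟨fun x y => (key x).trans (key y).symm⟩, ?_⟩
  exact fp_acyclic_union A' (fp_acyclic_mono (fromEdgeSet_mono Set.diff_subset) hac) huv hnr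

lemma fp_coe_symmDiff (T : Finset (Sym2 V)) (a b : Sym2 V)
    (ha : a ∈ T) (hb : b ∉ T) (hne : a ≠ b) :
    (↑(symmDiff T {a, b}) : Set (Sym2 V)) = ((↑T : Set (Sym2 V)) \ {a}) ∪ {b} := by
  ext x
  simp only [Finset.coe_sort_coe, Finset.mem_coe, Finset.mem_symmDiff, Finset.mem_insert,
    Finset.mem_singleton, Set.mem_union, Set.mem_diff, Set.mem_singleton_iff]
  by_cases hxa : x = a <;> by_cases hxb : x = b <;> subst_vars <;> simp_all <;> tauto

end FanPivotHelpers

lemma fp_ivt_up : ∀ (L : ℕ) (g : ℕ → ℕ),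
    (∀ t, t < L → (g (t + 1) = g t + 1 ∨ g t = g (t + 1) + 1)) →
    ∀ z, g 0 ≤ z → z ≤ g L → ∃ t, t ≤ L ∧ g t = z := by
  intro L
  induction L with
  | zero => intro g _ z h1 h2; exact ⟨0, le_refl _, by omega⟩
  | succ L ih =>
    intro g hs z h1 h2
    by_cases hz : z ≤ g L
    · obtain ⟨t, ht, hgt⟩ := ih g (fun t ht => hs t (by omega)) z h1 hz
      exact ⟨t, by omega, hgt⟩
    · have h3 := hs L (by omega)
      exact ⟨L + 1, le_refl _, by omega⟩

lemma fp_ivt_down : ∀ (L : ℕ) (g : ℕ → ℕ),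
    (∀ t, t < L → (g (t + 1) = g t + 1 ∨ g t = g (t + 1) + 1)) →
    ∀ z, z ≤ g 0 → g L ≤ z → ∃ t, t ≤ L ∧ g t = z := by
  intro L
  induction L with
  | zero => intro g _ z h1 h2; exact ⟨0, le_refl _, by omega⟩
  | succ L ih =>
    intro g hs z h1 h2
    by_cases hz : g L ≤ z
    · obtain ⟨t, ht, hgt⟩ := ih g (fun t ht => hs t (by omega)) z h1 hz
      exact ⟨t, by omega, hgt⟩
    · have h3 := hs L (by omega)
      exact ⟨L + 1, le_refl _, by omega⟩

lemma fp_fan_step {n : ℕ} {a b : Fin n} (h : (fanGraph n).Adj a b) (ha : a.val ≠ 0)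
    (hb : b.val ≠ 0) : a.val + 1 = b.val ∨ b.val + 1 = a.val := by
  rw [fanGraph, fromRel_adj] at h
  obtain ⟨hne, hor⟩ := h
  omega

lemma fp_fan_edge_char {n : ℕ} {g : Sym2 (Fin n)} (hg : g ∈ (fanGraph n).edgeSet) :
    (∃ z k : Fin n, z.val = 0 ∧ 1 ≤ k.val ∧ g = s(z, k)) ∨
      (∃ i j : Fin n, 1 ≤ i.val ∧ i.val + 1 = j.val ∧ g = s(i, j)) := by
  induction g using Sym2.ind with
  | _ u v =>
    rw [mem_edgeSet, fanGraph, fromRel_adj] at hg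
    obtain ⟨hne, hcase⟩ := hg
    have hnev : u.val ≠ v.val := fun h => hne (Fin.ext h)
    by_cases hu : u.val = 0
    · exact Or.inl ⟨u, v, hu, by omega, rfl⟩
    by_cases hv : v.val = 0
    · exact Or.inl ⟨v, u, hv, by omega, Sym2.eq_swap⟩
    have h2 : u.val + 1 = v.val ∨ v.val + 1 = u.val := by omega
    rcases h2 with h2 | h2
    · exact Or.inr ⟨u, v, by omega, h2, rfl⟩
    · exact Or.inr ⟨v, u, by omega, h2, Sym2.eq_swap⟩

lemma fp_convex {n : ℕ} (A : Set (Sym2 (Fin n))) (hA : SimpleGraph.fromEdgeSet A ≤ fanGraph n)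
    {y : Fin n} (h0 : ∀ x : Fin n, (SimpleGraph.fromEdgeSet A).Reachable x y → x.val ≠ 0)
    {w : Fin n} (hr : (SimpleGraph.fromEdgeSet A).Reachable w y) (z : Fin n)
    (hz : (w.val ≤ z.val ∧ z.val ≤ y.val) ∨ (y.val ≤ z.val ∧ z.val ≤ w.val)) :
    (SimpleGraph.fromEdgeSet A).Reachable z y := by
  obtain ⟨Q⟩ := hr
  have hstep : ∀ t, t < Q.length →
      ((Q.getVert (t + 1)).val = (Q.getVert t).val + 1 ∨
        (Q.getVert t).val = (Q.getVert (t + 1)).val + 1) := by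
    intro t ht
    have hadj := Q.adj_getVert_succ ht
    have h1 : (SimpleGraph.fromEdgeSet A).Reachable (Q.getVert t) y := ⟨Q.drop t⟩
    have h2 : (SimpleGraph.fromEdgeSet A).Reachable (Q.getVert (t + 1)) y := ⟨Q.drop (t + 1)⟩
    have := fp_fan_step (hA hadj) (h0 _ h1) (h0 _ h2)
    omega
  have hg0 : (Q.getVert 0).val = w.val := by rw [SimpleGraph.Walk.getVert_zero]
  have hgL : (Q.getVert Q.length).val = y.val := by rw [SimpleGraph.Walk.getVert_length]
  have hex : ∃ t, t ≤ Q.length ∧ (Q.getVert t).val = z.val := by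
    rcases hz with ⟨h1, h2⟩ | ⟨h1, h2⟩
    · exact fp_ivt_up Q.length (fun t => (Q.getVert t).val) hstep z.val
        (by omega) (by omega)
    · exact fp_ivt_down Q.length (fun t => (Q.getVert t).val) hstep z.val
        (by omega) (by omega)
  obtain ⟨t, ht, hgt⟩ := hex
  have heq : Q.getVert t = z := Fin.ext hgt
  exact ⟨(Q.drop t).copy heq rfl⟩

/-- Let `n ≥ 3` and let `ℓ` be the left-to-right labeling of the fan graph `F_n`
(`ℓ {0,i} = 2i - 1`, `ℓ {i,i+1} = 2i`). For every spanning tree `T` of `F_n` and every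
edge exchange `{e, f}` for `T` with `ℓ e < ℓ f`, there is an edge `d` of `F_n` with
`ℓ d < ℓ f` such that `d` and `f` share an end vertex and `{d, f}` is an edge exchange
for `T`. -/
theorem fanGraph_pivot_alternative (n : ℕ) (hn : 3 ≤ n) (ℓ : Sym2 (Fin n) → ℕ)
    (hspoke : ∀ a i : Fin n, a.val = 0 → 1 ≤ i.val → ℓ s(a, i) = 2 * i.val - 1)
    (hpath : ∀ i j : Fin n, 1 ≤ i.val → i.val + 1 = j.val → ℓ s(i, j) = 2 * i.val)
    (T : Finset (Sym2 (Fin n))) (hT : IsSpanningTree (fanGraph n) T)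
    (e f : Sym2 (Fin n)) (hef : IsEdgeExchange (fanGraph n) T e f) (hl : ℓ e < ℓ f) :
    ∃ d : Sym2 (Fin n), ℓ d < ℓ f ∧ (∃ v : Fin n, v ∈ d ∧ v ∈ f) ∧
      IsEdgeExchange (fanGraph n) T d f := by
  obtain ⟨hTsub, hTc, hTa⟩ := hT
  obtain ⟨heG, hfG, hefne, hmemiff, hTX⟩ := hef
  have hn0 : (0 : ℕ) < n := by omega
  have hNe : Nonempty (Fin n) := ⟨⟨0, hn0⟩⟩
  have hle : SimpleGraph.fromEdgeSet (↑T : Set (Sym2 (Fin n))) ≤ fanGraph n := by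
    have h := SimpleGraph.fromEdgeSet_mono hTsub
    rwa [SimpleGraph.fromEdgeSet_edgeSet] at h
  have hdne : ∀ d : Sym2 (Fin n), ℓ d < ℓ f → d ≠ f := by
    intro d h hdf
    rw [hdf] at h
    omega
  have mk₁ : ∀ d : Sym2 (Fin n), d ∈ (fanGraph n).edgeSet → d ∈ T → f ∉ T → ℓ d < ℓ f →
      (SimpleGraph.fromEdgeSet (((↑T : Set (Sym2 (Fin n))) \ {d}) ∪ {f})).Connected →
      (SimpleGraph.fromEdgeSet (((↑T : Set (Sym2 (Fin n))) \ {d}) ∪ {f})).IsAcyclic →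
      IsEdgeExchange (fanGraph n) T d f := by
    intro d hdG hdT hfT hld hconn hacyc
    have hdf := hdne d hld
    have hcoe := fp_coe_symmDiff T d f hdT hfT hdf
    unfold IsEdgeExchange IsSpanningTree
    refine ⟨hdG, hfG, hdf, iff_of_true hdT hfT, ?_, ?_, ?_⟩
    · rw [hcoe]
      rintro x (⟨hx, -⟩ | hx)
      · exact hTsub hx
      · rw [Set.mem_singleton_iff] at hx
        exact hx ▸ hfG
    · rw [hcoe]; exact hconn
    · rw [hcoe]; exact hacyc
  have mk₂ : ∀ d : Sym2 (Fin n), d ∈ (fanGraph n).edgeSet → d ∉ T → f ∈ T → ℓ d < ℓ f →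
      (SimpleGraph.fromEdgeSet (((↑T : Set (Sym2 (Fin n))) \ {f}) ∪ {d})).Connected →
      (SimpleGraph.fromEdgeSet (((↑T : Set (Sym2 (Fin n))) \ {f}) ∪ {d})).IsAcyclic →
      IsEdgeExchange (fanGraph n) T d f := by
    intro d hdG hdT hfT hld hconn hacyc
    have hdf := hdne d hld
    have hcoe : (↑(symmDiff T {d, f}) : Set (Sym2 (Fin n))) =
        ((↑T : Set (Sym2 (Fin n))) \ {f}) ∪ {d} := by
      rw [show ({d, f} : Finset (Sym2 (Fin n))) = {f, d} from Finset.pair_comm d f]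
      exact fp_coe_symmDiff T f d hfT hdT (Ne.symm hdf)
    unfold IsEdgeExchange IsSpanningTree
    refine ⟨hdG, hfG, hdf, iff_of_false (by simpa using hdT) (not_not_intro hfT), ?_, ?_, ?_⟩
    · rw [hcoe]
      rintro x (⟨hx, -⟩ | hx)
      · exact hTsub hx
      · rw [Set.mem_singleton_iff] at hx
        exact hx ▸ hdG
    · rw [hcoe]; exact hconn
    · rw [hcoe]; exact hacyc
  by_cases hfT : f ∈ T
  · -- CASE f ∈ T, e ∉ T : cut argument
    have heT' : e ∉ T := fun heT => (hmemiff.mp heT) hfT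
    rcases fp_fan_edge_char hfG with ⟨z, j, hz0, hj1, hfeq⟩ | ⟨i, j, hi1, hij, hfeq⟩
    · -- f = s(z, j), a spoke
      subst hfeq
      have hfmemS : s(z, j) ∈ (↑T : Set (Sym2 (Fin n))) := Finset.mem_coe.mpr hfT
      have hzj_ne : z ≠ j := fun h => by
        have := congrArg Fin.val h; omega
      have hbr := fp_bridge hTa hfmemS hzj_ne
      by_cases hj1' : j.val = 1
      · exfalso
        have hlf : ℓ s(z, j) = 2 * j.val - 1 := hspoke z j hz0 hj1
        rcases fp_fan_edge_char heG with ⟨z', m, hz'0, hm1, heeq⟩ | ⟨m, m', hm1, hmm', heeq⟩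
        · have hle' : ℓ e = 2 * m.val - 1 := by rw [heeq]; exact hspoke z' m hz'0 hm1
          omega
        · have hle' : ℓ e = 2 * m.val := by rw [heeq]; exact hpath m m' hm1 hmm'
          omega
      · have hj2 : 2 ≤ j.val := by omega
        set c : Fin n := ⟨j.val - 1, by omega⟩ with hcdef
        have hcv : c.val = j.val - 1 := rfl
        have hc1 : 1 ≤ c.val := by omega
        have hcj : c.val + 1 = j.val := by omega
        by_cases hreach : (SimpleGraph.fromEdgeSet
            ((↑T : Set (Sym2 (Fin n))) \ {s(z, j)})).Reachable c j
        · -- d = s(z, c)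
          have hzc_ne : z ≠ c := fun h => by
            have := congrArg Fin.val h; omega
          have hdG : (fanGraph n).Adj z c := by
            rw [fanGraph, SimpleGraph.fromRel_adj]
            exact ⟨hzc_ne, Or.inl (Or.inl hz0)⟩
          have hld : ℓ s(z, c) < ℓ s(z, j) := by
            rw [hspoke z c hz0 hc1, hspoke z j hz0 hj1]; omega
          have hnr : ¬ (SimpleGraph.fromEdgeSet
              ((↑T : Set (Sym2 (Fin n))) \ {s(z, j)})).Reachable z c :=
            fun h => hbr (h.trans hreach)
          have hdT : s(z, c) ∉ T := by
            intro hdT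
            exact hnr ((SimpleGraph.fromEdgeSet_adj
              ((↑T : Set (Sym2 (Fin n))) \ {s(z, j)})).mpr
              ⟨⟨Finset.mem_coe.mpr hdT, hdne _ hld⟩, hzc_ne⟩).reachable
          have hsw := fp_swap (↑T : Set (Sym2 (Fin n))) hTc hTa hzj_ne hfmemS hzc_ne hnr
          exact ⟨s(z, c), hld, ⟨z, Sym2.mem_mk_left z c, Sym2.mem_mk_left z j⟩,
            mk₂ s(z, c) ((SimpleGraph.mem_edgeSet _).mpr hdG) hdT hfT hld hsw.1 hsw.2⟩
        · -- d = s(c, j)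
          have hcj_ne : c ≠ j := fun h => by
            have := congrArg Fin.val h; omega
          have hdG : (fanGraph n).Adj c j := by
            rw [fanGraph, SimpleGraph.fromRel_adj]
            exact ⟨hcj_ne, Or.inl (Or.inr hcj)⟩
          have hld : ℓ s(c, j) < ℓ s(z, j) := by
            rw [hpath c j hc1 hcj, hspoke z j hz0 hj1]; omega
          have hdT : s(c, j) ∉ T := by
            intro hdT
            exact hreach ((SimpleGraph.fromEdgeSet_adj
              ((↑T : Set (Sym2 (Fin n))) \ {s(z, j)})).mpr
              ⟨⟨Finset.mem_coe.mpr hdT, hdne _ hld⟩, hcj_ne⟩).reachable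
          have hsw := fp_swap (↑T : Set (Sym2 (Fin n))) hTc hTa hzj_ne hfmemS hcj_ne hreach
          exact ⟨s(c, j), hld, ⟨j, Sym2.mem_mk_right c j, Sym2.mem_mk_right z j⟩,
            mk₂ s(c, j) ((SimpleGraph.mem_edgeSet _).mpr hdG) hdT hfT hld hsw.1 hsw.2⟩
    · -- f = s(i, j), a path edge, j = i+1
      subst hfeq
      have hfmemS : s(i, j) ∈ (↑T : Set (Sym2 (Fin n))) := Finset.mem_coe.mpr hfT
      have hij_ne : i ≠ j := fun h => by
        have := congrArg Fin.val h; omega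
      have hbr := fp_bridge hTa hfmemS hij_ne
      have z0 : Fin n := ⟨0, hn0⟩
      by_cases h0i : (SimpleGraph.fromEdgeSet
          ((↑T : Set (Sym2 (Fin n))) \ {s(i, j)})).Reachable ⟨0, hn0⟩ i
      · -- contradiction branch, using e
        exfalso
        have hcoe : (↑(symmDiff T {e, s(i, j)}) : Set (Sym2 (Fin n))) =
            ((↑T : Set (Sym2 (Fin n))) \ {s(i, j)}) ∪ {e} := by
          rw [show ({e, s(i, j)} : Finset (Sym2 (Fin n))) = {s(i, j), e} from
            Finset.pair_comm _ _]
          exact fp_coe_symmDiff T s(i, j) e hfT heT' (Ne.symm hefne)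
        obtain ⟨hXsub, hXc, hXa⟩ := hTX
        rw [hcoe] at hXc
        have side : ∀ x : Fin n,
            (SimpleGraph.fromEdgeSet ((↑T : Set (Sym2 (Fin n))) \ {s(i, j)})).Reachable x i ∨
            (SimpleGraph.fromEdgeSet ((↑T : Set (Sym2 (Fin n))) \ {s(i, j)})).Reachable x j := by
          intro x
          obtain ⟨w1⟩ := hTc.preconnected x i
          rcases fp_reach_of_walk_sides (↑T : Set (Sym2 (Fin n))) s(i, j) w1 with h | ⟨r, hr, h⟩
          · exact Or.inl h
          · rw [Sym2.mem_iff] at hr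
            rcases hr with rfl | rfl
            · exact Or.inl h
            · exact Or.inr h
        have hnz : ∀ x : Fin n,
            (SimpleGraph.fromEdgeSet ((↑T : Set (Sym2 (Fin n))) \ {s(i, j)})).Reachable x j →
            x.val ≠ 0 := by
          intro x hx h0
          have hxz : x = (⟨0, hn0⟩ : Fin n) := Fin.ext h0
          rw [hxz] at hx
          exact hbr (h0i.symm.trans hx)
        have hAle : SimpleGraph.fromEdgeSet ((↑T : Set (Sym2 (Fin n))) \ {s(i, j)}) ≤
            fanGraph n := le_trans (SimpleGraph.fromEdgeSet_mono Set.diff_subset) hle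
        have hlf : ℓ s(i, j) = 2 * i.val := hpath i j hi1 hij
        rcases fp_fan_edge_char heG with ⟨z', m, hz'0, hm1, heeq⟩ | ⟨m, m', hm1, hmm', heeq⟩
        · -- e = s(z', m), spoke
          subst heeq
          have hcross : ¬ (SimpleGraph.fromEdgeSet
              ((↑T : Set (Sym2 (Fin n))) \ {s(i, j)})).Reachable z' m := by
            intro hr
            exact hbr (fp_contract hr (hXc.preconnected i j))
          have hm_le : m.val ≤ i.val := by
            have h1 : ℓ s(z', m) = 2 * m.val - 1 := hspoke z' m hz'0 hm1
            omega
          rcases side m with hmi | hmj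
          · have hz'z : z' = (⟨0, hn0⟩ : Fin n) := Fin.ext hz'0
            rw [hz'z] at hcross
            exact hcross (h0i.trans hmi.symm)
          · exact hbr (fp_convex _ hAle hnz hmj i (Or.inl ⟨hm_le, by omega⟩))
        · -- e = s(m, m'), path edge
          subst heeq
          have hcross : ¬ (SimpleGraph.fromEdgeSet
              ((↑T : Set (Sym2 (Fin n))) \ {s(i, j)})).Reachable m m' := by
            intro hr
            exact hbr (fp_contract hr (hXc.preconnected i j))
          have hm_lt : m.val < i.val := by
            have h1 : ℓ s(m, m') = 2 * m.val := hpath m m' hm1 hmm'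
            omega
          rcases side m with hmi | hmj
          · rcases side m' with hm'i | hm'j
            · exact hcross (hmi.trans hm'i.symm)
            · exact hbr (fp_convex _ hAle hnz hm'j i (Or.inl ⟨by omega, by omega⟩))
          · exact hbr (fp_convex _ hAle hnz hmj i (Or.inl ⟨by omega, by omega⟩))
      · -- d = s(⟨0⟩, i)
        have hz0i_ne : (⟨0, hn0⟩ : Fin n) ≠ i := fun h => by
          have := congrArg Fin.val h
          simp at this
          omega
        have hdG : (fanGraph n).Adj ⟨0, hn0⟩ i := by
          rw [fanGraph, SimpleGraph.fromRel_adj]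
          exact ⟨hz0i_ne, Or.inl (Or.inl rfl)⟩
        have hld : ℓ s((⟨0, hn0⟩ : Fin n), i) < ℓ s(i, j) := by
          rw [hspoke ⟨0, hn0⟩ i rfl hi1, hpath i j hi1 hij]; omega
        have hdT : s((⟨0, hn0⟩ : Fin n), i) ∉ T := by
          intro hdT
          exact h0i ((SimpleGraph.fromEdgeSet_adj
            ((↑T : Set (Sym2 (Fin n))) \ {s(i, j)})).mpr
            ⟨⟨Finset.mem_coe.mpr hdT, hdne _ hld⟩, hz0i_ne⟩).reachable
        have hsw := fp_swap (↑T : Set (Sym2 (Fin n))) hTc hTa hij_ne hfmemS hz0i_ne h0i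
        exact ⟨s((⟨0, hn0⟩ : Fin n), i), hld,
          ⟨i, Sym2.mem_mk_right _ i, Sym2.mem_mk_left i j⟩,
          mk₂ _ ((SimpleGraph.mem_edgeSet _).mpr hdG) hdT hfT hld hsw.1 hsw.2⟩
  · -- CASE f ∉ T, e ∈ T : cycle argument
    have heT : e ∈ T := hmemiff.mpr hfT
    rcases fp_fan_edge_char hfG with ⟨z, j, hz0, hj1, hfeq⟩ | ⟨i, j, hi1, hij, hfeq⟩
    · -- f = s(z, j), a spoke
      subst hfeq
      have hzj_ne : z ≠ j := fun h => by
        have := congrArg Fin.val h; omega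
      obtain ⟨w0⟩ := hTc.preconnected z j
      obtain ⟨P0, hP0⟩ := w0.toPath
      obtain ⟨k, hadjzk, P', hPeq⟩ := SimpleGraph.Walk.exists_eq_cons_of_ne hzj_ne P0
      rw [hPeq, SimpleGraph.Walk.cons_isPath_iff] at hP0
      have hadj' := hadjzk
      rw [SimpleGraph.fromEdgeSet_adj] at hadj'
      obtain ⟨hmemzk, hzk_ne⟩ := hadj'
      have hk1 : 1 ≤ k.val := by
        rcases Nat.eq_zero_or_pos k.val with h | h
        · exact absurd (Fin.ext (by omega) : z = k) hzk_ne
        · exact h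
      have hkj : k ≠ j := by
        intro h
        rw [h] at hmemzk
        exact hfT (Finset.mem_coe.mp hmemzk)
      have hkjv : k.val ≠ j.val := fun h => hkj (Fin.ext h)
      have hlf : ℓ s(z, j) = 2 * j.val - 1 := hspoke z j hz0 hj1
      by_cases hklt : k.val < j.val
      · -- d = s(z, k)
        have hld : ℓ s(z, k) < ℓ s(z, j) := by
          rw [hspoke z k hz0 hk1, hlf]; omega
        have hbr := fp_bridge hTa hmemzk hzk_ne
        have hnr : ¬ (SimpleGraph.fromEdgeSet
            ((↑T : Set (Sym2 (Fin n))) \ {s(z, k)})).Reachable z j := by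
          intro hr
          have hdP' : s(z, k) ∉ P'.edges :=
            fun hd => hP0.2 (P'.fst_mem_support_of_mem_edges hd)
          have h2 := fp_transfer_away P' hdP'
          exact hbr (hr.trans h2.symm)
        have hsw := fp_swap (↑T : Set (Sym2 (Fin n))) hTc hTa hzk_ne hmemzk hzj_ne hnr
        exact ⟨s(z, k), hld, ⟨z, Sym2.mem_mk_left z k, Sym2.mem_mk_left z j⟩,
          mk₁ s(z, k) ((SimpleGraph.mem_edgeSet _).mpr (hle hadjzk)) (Finset.mem_coe.mp hmemzk)
            hfT hld hsw.1 hsw.2⟩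
      · have hkgt : j.val < k.val := by omega
        have hfullpath : (SimpleGraph.Walk.cons hadjzk P').IsPath :=
          (SimpleGraph.Walk.cons_isPath_iff _ _).mpr ⟨hP0.1, hP0.2⟩
        have hRpath : (SimpleGraph.Walk.cons hadjzk P').reverse.IsPath := hfullpath.reverse
        obtain ⟨y, hadjjy, R', hReq⟩ :=
          SimpleGraph.Walk.exists_eq_cons_of_ne (Ne.symm hzj_ne)
            (SimpleGraph.Walk.cons hadjzk P').reverse
        rw [hReq, SimpleGraph.Walk.cons_isPath_iff] at hRpath
        have hadjjy' := hadjjy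
        rw [SimpleGraph.fromEdgeSet_adj] at hadjjy'
        obtain ⟨hmemjy, hjy_ne⟩ := hadjjy'
        have hy_ne_z : y ≠ z := by
          intro h
          rw [h] at hmemjy
          rw [Sym2.eq_swap] at hmemjy
          exact hfT (Finset.mem_coe.mp hmemjy)
        have hyv : y.val ≠ 0 := fun h => hy_ne_z (Fin.ext (by omega))
        have hfanjy := hle hadjjy
        rw [fanGraph, SimpleGraph.fromRel_adj] at hfanjy
        have hycase : y.val + 1 = j.val ∨ j.val + 1 = y.val := by
          obtain ⟨-, hor⟩ := hfanjy
          omega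
        rcases hycase with hy1 | hy2
        · -- d = s(y, j)
          have hy1' : 1 ≤ y.val := by omega
          have hld : ℓ s(y, j) < ℓ s(z, j) := by
            rw [hpath y j hy1' hy1, hlf]; omega
          have hmemyj : s(y, j) ∈ (↑T : Set (Sym2 (Fin n))) := by
            rwa [Sym2.eq_swap] at hmemjy
          have hbr := fp_bridge hTa hmemyj (fun h => hjy_ne (h.symm))
          have hnr : ¬ (SimpleGraph.fromEdgeSet
              ((↑T : Set (Sym2 (Fin n))) \ {s(y, j)})).Reachable z j := by
            intro hr
            have hdR' : s(y, j) ∉ R'.edges :=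
              fun hd => hRpath.2 (R'.snd_mem_support_of_mem_edges hd)
            have h2 := fp_transfer_away R' hdR'
            exact hbr (h2.trans hr)
          have hsw := fp_swap (↑T : Set (Sym2 (Fin n))) hTc hTa
            (fun h => hjy_ne (h.symm)) hmemyj hzj_ne hnr
          exact ⟨s(y, j), hld, ⟨j, Sym2.mem_mk_right y j, Sym2.mem_mk_right z j⟩,
            mk₁ s(y, j) ((SimpleGraph.mem_edgeSet _).mpr (hle hadjjy).symm)
              (Finset.mem_coe.mp hmemyj) hfT hld hsw.1 hsw.2⟩
        · -- contradiction branch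
          exfalso
          have hcoe := fp_coe_symmDiff T e s(z, j) heT hfT hefne
          obtain ⟨hXsub, hXc, hXa⟩ := hTX
          rw [hcoe] at hXa
          have hfmem : s(z, j) ∈ (((↑T : Set (Sym2 (Fin n))) \ {e}) ∪ {s(z, j)}) := Or.inr rfl
          have hbr2 := fp_bridge hXa hfmem hzj_ne
          have hfT' : s(z, j) ∉ (↑T : Set (Sym2 (Fin n))) :=
            fun h => hfT (Finset.mem_coe.mp h)
          have hsetid : ((((↑T : Set (Sym2 (Fin n))) \ {e}) ∪ {s(z, j)}) \ {s(z, j)}) =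
              (↑T : Set (Sym2 (Fin n))) \ {e} := by
            ext x
            simp only [Set.mem_diff, Set.mem_union, Set.mem_singleton_iff]
            constructor
            · rintro ⟨h1 | h1, h2⟩
              · exact h1
              · exact absurd h1 h2
            · rintro ⟨h1, h2⟩
              exact ⟨Or.inl ⟨h1, h2⟩, fun hxf => hfT' (hxf ▸ h1)⟩
          rw [hsetid] at hbr2
          have heP : e ∈ (SimpleGraph.Walk.cons hadjzk P').edges := by
            by_contra hne'
            exact hbr2 (fp_transfer_away _ hne')
          rw [SimpleGraph.Walk.edges_cons] at heP
          rcases List.mem_cons.mp heP with heq | heP'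
          · have hle' : ℓ e = 2 * k.val - 1 := by rw [heq]; exact hspoke z k hz0 hk1
            omega
          · rcases fp_fan_edge_char heG with ⟨z', m, hz'0, hm1, heeq⟩ | ⟨m, m', hm1, hmm', heeq⟩
            · have hz'P : z' ∈ P'.support :=
                P'.fst_mem_support_of_mem_edges (heeq ▸ heP')
              have hz'z : z' = z := Fin.ext (by omega)
              exact hP0.2 (hz'z ▸ hz'P)
            · have hlev : ℓ e = 2 * m.val := by rw [heeq]; exact hpath m m' hm1 hmm'
              have hmj : m.val < j.val := by omega
              have hmP : m ∈ P'.support :=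
                P'.fst_mem_support_of_mem_edges (heeq ▸ heP')
              have hnz : ∀ a : Fin n, a ∈ P'.support → a.val ≠ 0 := by
                intro a ha h0
                exact hP0.2 ((Fin.ext (by omega) : a = z) ▸ ha)
              have hstep : ∀ t, t < (P'.takeUntil m hmP).length →
                  (((P'.takeUntil m hmP).getVert (t + 1)).val =
                      ((P'.takeUntil m hmP).getVert t).val + 1 ∨
                    ((P'.takeUntil m hmP).getVert t).val =
                      ((P'.takeUntil m hmP).getVert (t + 1)).val + 1) := by
                intro t ht
                have hadj := (P'.takeUntil m hmP).adj_getVert_succ ht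
                have h1 := hnz _ (P'.support_takeUntil_subset hmP
                  (fp_getVert_mem_support _ t))
                have h2 := hnz _ (P'.support_takeUntil_subset hmP
                  (fp_getVert_mem_support _ (t + 1)))
                have := fp_fan_step (hle hadj) h1 h2
                omega
              have hQ0 : ((P'.takeUntil m hmP).getVert 0).val = k.val := by
                rw [SimpleGraph.Walk.getVert_zero]
              have hQL : ((P'.takeUntil m hmP).getVert
                  (P'.takeUntil m hmP).length).val = m.val := by
                rw [SimpleGraph.Walk.getVert_length]
              obtain ⟨t, ht, hgt⟩ := fp_ivt_down (P'.takeUntil m hmP).length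
                (fun t => ((P'.takeUntil m hmP).getVert t).val) hstep j.val
                (by omega) (by omega)
              have hjQ : j ∈ (P'.takeUntil m hmP).support := by
                have hq : (P'.takeUntil m hmP).getVert t = j := Fin.ext hgt
                have hms := fp_getVert_mem_support (P'.takeUntil m hmP) t
                rwa [hq] at hms
              have hspec := P'.take_spec hmP
              have hnd := hP0.1.support_nodup
              rw [← hspec, SimpleGraph.Walk.support_append] at hnd
              have hjdrop : j ∈ (P'.dropUntil m hmP).support.tail := by
                have hjend : j ∈ (P'.dropUntil m hmP).support :=
                  SimpleGraph.Walk.end_mem_support _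
                rw [SimpleGraph.Walk.support_eq_cons] at hjend
                rcases List.mem_cons.mp hjend with h | h
                · have := congrArg Fin.val h
                  omega
                · exact h
              rw [List.nodup_append] at hnd
              exact hnd.2.2 j hjQ j hjdrop rfl
    · -- f = s(i, j), a path edge
      subst hfeq
      have hij_ne : i ≠ j := fun h => by
        have := congrArg Fin.val h; omega
      obtain ⟨w0⟩ := hTc.preconnected i j
      obtain ⟨P0, hP0⟩ := w0.toPath
      obtain ⟨x, hadjix, P', hPeq⟩ := SimpleGraph.Walk.exists_eq_cons_of_ne hij_ne P0
      rw [hPeq, SimpleGraph.Walk.cons_isPath_iff] at hP0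
      have hadj' := hadjix
      rw [SimpleGraph.fromEdgeSet_adj] at hadj'
      obtain ⟨hmemix, hix_ne⟩ := hadj'
      have hxj : x ≠ j := by
        intro h
        rw [h] at hmemix
        exact hfT (Finset.mem_coe.mp hmemix)
      have hxjv : x.val ≠ j.val := fun h => hxj (Fin.ext h)
      have hfanix0 := hle hadjix
      have hfanix := hfanix0
      rw [fanGraph, SimpleGraph.fromRel_adj] at hfanix
      have hlf : ℓ s(i, j) = 2 * i.val := hpath i j hi1 hij
      have hld : ℓ s(i, x) < ℓ s(i, j) := by
        by_cases hx0 : x.val = 0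
        · have h1 : ℓ s(i, x) = 2 * i.val - 1 := by
            rw [Sym2.eq_swap]; exact hspoke x i hx0 hi1
          omega
        · have hx1 : x.val + 1 = i.val := by
            obtain ⟨-, hor⟩ := hfanix
            omega
          have hx1' : 1 ≤ x.val := by omega
          have h1 : ℓ s(i, x) = 2 * x.val := by
            rw [Sym2.eq_swap]; exact hpath x i hx1' hx1
          omega
      have hbr := fp_bridge hTa hmemix hix_ne
      have hnr : ¬ (SimpleGraph.fromEdgeSet
          ((↑T : Set (Sym2 (Fin n))) \ {s(i, x)})).Reachable i j := by
        intro hr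
        have hdP' : s(i, x) ∉ P'.edges :=
          fun hd => hP0.2 (P'.fst_mem_support_of_mem_edges hd)
        have h2 := fp_transfer_away P' hdP'
        exact hbr (hr.trans h2.symm)
      have hsw := fp_swap (↑T : Set (Sym2 (Fin n))) hTc hTa hix_ne hmemix hij_ne hnr
      exact ⟨s(i, x), hld, ⟨i, Sym2.mem_mk_left i x, Sym2.mem_mk_left i j⟩,
        mk₁ s(i, x) ((SimpleGraph.mem_edgeSet _).mpr hfanix0) (Finset.mem_coe.mp hmemix)
          hfT hld hsw.1 hsw.2⟩
end

section
/- Let G be a finite connected simple graph with m edges, let ℓ : E(G) → {1, …, m} be any bijective edge labeling, and let T̂ be any spanning tree of G. Then there exists a listing of all spanning trees of G, each appearing exactly once, starting with T̂, that is genlex with respect to ℓ and in which any two consecutive trees differ in an edge exchange. -/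
/-- A listing `L` of spanning trees (as edge sets) is genlex with respect to the edge
labeling `ℓ`: for every `k` and every set `S` of edges, the set of positions `i` in the
listing whose tree restricted to the edges with label `> k` equals `S` is an interval
of consecutive integers. -/
def IsGenlex {V : Type*} [DecidableEq V] (ℓ : Sym2 V → ℕ) (L : List (Finset (Sym2 V))) :
    Prop :=
  ∀ (k : ℕ) (S : Finset (Sym2 V)) (i p j : ℕ)
    (hi : i < L.length) (hp : p < L.length) (hj : j < L.length),
    i ≤ p → p ≤ j →
    (L.get ⟨i, hi⟩).filter (fun e => k < ℓ e) = S →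
    (L.get ⟨j, hj⟩).filter (fun e => k < ℓ e) = S →
    (L.get ⟨p, hp⟩).filter (fun e => k < ℓ e) = S

section Helpers

variable {V : Type*} [DecidableEq V]

lemma symmDiff_card_two {T : Finset (Sym2 V)} {x y : Sym2 V}
    (hx : x ∈ T) (hy : y ∉ T) :
    (symmDiff T (insert y (T.erase x))).card = 2 := by
  have hxy : x ≠ y := fun h => hy (h ▸ hx)
  have hset : symmDiff T (insert y (T.erase x)) = {x, y} := by
    ext z
    simp only [Finset.mem_symmDiff, Finset.mem_insert, Finset.mem_erase,
      Finset.mem_singleton]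
    by_cases hzx : z = x <;> by_cases hzy : z = y <;> by_cases hzT : z ∈ T <;>
      simp_all
  rw [hset]
  exact Finset.card_pair hxy

lemma isGenlex_singleton (ℓ : Sym2 V → ℕ) (T : Finset (Sym2 V)) : IsGenlex ℓ [T] := by
  intro k S i p j hi hp hj _ _ h1 _
  have hi0 : i = 0 := by simpa using hi
  have hp0 : p = 0 := by simpa using hp
  have : (⟨p, hp⟩ : Fin ([T].length)) = ⟨i, hi⟩ := by
    apply Fin.ext; simp [hi0, hp0]
  rw [this]
  exact h1

lemma isGenlex_append {ℓ : Sym2 V → ℕ} {L1 L2 : List (Finset (Sym2 V))}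
    (h1 : IsGenlex ℓ L1) (h2 : IsGenlex ℓ L2)
    (hk : ∀ k : ℕ,
      (∀ T ∈ L1, ∀ T' ∈ L2,
        T.filter (fun e => k < ℓ e) ≠ T'.filter (fun e => k < ℓ e)) ∨
      (∀ T ∈ L1 ++ L2, ∀ T' ∈ L1 ++ L2,
        T.filter (fun e => k < ℓ e) = T'.filter (fun e => k < ℓ e))) :
    IsGenlex ℓ (L1 ++ L2) := by
  intro k S i p j hi hp hj hip hpj hSi hSj
  have hlen : (L1 ++ L2).length = L1.length + L2.length := List.length_append
  have hgetl : ∀ (n : ℕ) (hn : n < (L1 ++ L2).length) (hn1 : n < L1.length),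
      (L1 ++ L2).get ⟨n, hn⟩ = L1.get ⟨n, hn1⟩ := by
    intro n hn hn1
    simp [List.get_eq_getElem, List.getElem_append_left hn1]
  have hgetr : ∀ (n : ℕ) (hn : n < (L1 ++ L2).length) (hn1 : L1.length ≤ n),
      (L1 ++ L2).get ⟨n, hn⟩ =
        L2.get ⟨n - L1.length, by omega⟩ := by
    intro n hn hn1
    simp [List.get_eq_getElem, List.getElem_append_right hn1]
  rcases hk k with hsep | hconst
  · by_cases hi1 : i < L1.length
    · by_cases hj1 : j < L1.length
      · have hp1 : p < L1.length := lt_of_le_of_lt hpj hj1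
        rw [hgetl i hi hi1] at hSi
        rw [hgetl j hj hj1] at hSj
        rw [hgetl p hp hp1]
        exact h1 k S i p j hi1 hp1 hj1 hip hpj hSi hSj
      · exfalso
        have hj1' : L1.length ≤ j := le_of_not_gt hj1
        rw [hgetl i hi hi1] at hSi
        rw [hgetr j hj hj1'] at hSj
        exact hsep _ (L1.get_mem _) _ (L2.get_mem _) (hSi.trans hSj.symm)
    · have hi1' : L1.length ≤ i := le_of_not_gt hi1
      have hp1' : L1.length ≤ p := le_trans hi1' hip
      have hj1' : L1.length ≤ j := le_trans hp1' hpj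
      rw [hgetr i hi hi1'] at hSi
      rw [hgetr j hj hj1'] at hSj
      rw [hgetr p hp hp1']
      exact h2 k S (i - L1.length) (p - L1.length) (j - L1.length)
        (by omega) (by omega) (by omega) (by omega) (by omega) hSi hSj
  · have := hconst _ ((L1 ++ L2).get_mem ⟨p, hp⟩) _ ((L1 ++ L2).get_mem ⟨i, hi⟩)
    rw [this]
    exact hSi

end Helpers

section Key

variable {V : Type*} [DecidableEq V]

lemma key_abstract (ℓ : Sym2 V → ℕ) (E : Finset (Sym2 V)) :
    ∀ (F : Finset (Sym2 V)) (𝒯 : Finset (Finset (Sym2 V))),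
      (∀ T ∈ 𝒯, F ⊆ T ∧ T ⊆ E ∪ F) →
      (∀ T ∈ 𝒯, ∀ T' ∈ 𝒯, ∀ x ∈ T \ T', ∃ y ∈ T' \ T, insert y (T.erase x) ∈ 𝒯) →
      (∀ T ∈ 𝒯, ∀ T' ∈ 𝒯, ∀ x ∈ T' \ T, ∃ y ∈ T \ T', insert x (T.erase y) ∈ 𝒯) →
      ∀ T0 ∈ 𝒯, ∃ L : List (Finset (Sym2 V)),
        L.head? = some T0 ∧ L.Nodup ∧ (∀ T, T ∈ L ↔ T ∈ 𝒯) ∧ IsGenlex ℓ L ∧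
        L.Chain' fun T T' => (symmDiff T T').card = 2 := by
  induction E using Finset.strongInduction with
  | _ E ih =>
  intro F 𝒯 hFT hex hcoex T0 hT0
  rcases E.eq_empty_or_nonempty with rfl | hEne
  · -- base case : every tree equals F
    have hall : ∀ T ∈ 𝒯, T = F := by
      intro T hT
      have h2 := (hFT T hT).2
      rw [Finset.empty_union] at h2
      exact Finset.Subset.antisymm h2 (hFT T hT).1
    refine ⟨[T0], rfl, List.nodup_singleton _, ?_, isGenlex_singleton ℓ T0,
      List.isChain_singleton _⟩
    intro T
    simp only [List.mem_singleton]
    constructor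
    · rintro rfl; exact hT0
    · intro hT; rw [hall T hT, ← hall T0 hT0]
  · obtain ⟨e, heE, hmax⟩ := E.exists_max_image ℓ hEne
    have hE'ss : E.erase e ⊂ E := Finset.erase_ssubset heE
    set 𝒯₁ := 𝒯.filter (fun T => e ∈ T) with h𝒯₁
    set 𝒯₀ := 𝒯.filter (fun T => e ∉ T) with h𝒯₀
    have hmem1 : ∀ {T}, T ∈ 𝒯₁ ↔ T ∈ 𝒯 ∧ e ∈ T := by
      intro T; simp [h𝒯₁, Finset.mem_filter]
    have hmem0 : ∀ {T}, T ∈ 𝒯₀ ↔ T ∈ 𝒯 ∧ e ∉ T := by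
      intro T; simp [h𝒯₀, Finset.mem_filter]
    -- hypotheses for the recursive call on 𝒯₁
    have hsub1 : ∀ T ∈ 𝒯₁, insert e F ⊆ T ∧ T ⊆ E.erase e ∪ insert e F := by
      intro T hT
      obtain ⟨hT, heT⟩ := hmem1.1 hT
      constructor
      · exact Finset.insert_subset heT (hFT T hT).1
      · intro x hx
        rcases Finset.mem_union.1 ((hFT T hT).2 hx) with hxE | hxF
        · by_cases hxe : x = e
          · exact Finset.mem_union_right _ (by simp [hxe])
          · exact Finset.mem_union_left _ (Finset.mem_erase.2 ⟨hxe, hxE⟩)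
        · exact Finset.mem_union_right _ (Finset.mem_insert_of_mem hxF)
    have hex1 : ∀ T ∈ 𝒯₁, ∀ T' ∈ 𝒯₁, ∀ x ∈ T \ T',
        ∃ y ∈ T' \ T, insert y (T.erase x) ∈ 𝒯₁ := by
      intro T hT T' hT' x hx
      obtain ⟨hT, heT⟩ := hmem1.1 hT
      obtain ⟨hT', heT'⟩ := hmem1.1 hT'
      obtain ⟨y, hy, hnew⟩ := hex T hT T' hT' x hx
      have hxe : x ≠ e := by rintro rfl; exact (Finset.mem_sdiff.1 hx).2 heT'
      refine ⟨y, hy, hmem1.2 ⟨hnew, ?_⟩⟩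
      exact Finset.mem_insert_of_mem (Finset.mem_erase.2 ⟨Ne.symm hxe, heT⟩)
    have hcoex1 : ∀ T ∈ 𝒯₁, ∀ T' ∈ 𝒯₁, ∀ x ∈ T' \ T,
        ∃ y ∈ T \ T', insert x (T.erase y) ∈ 𝒯₁ := by
      intro T hT T' hT' x hx
      obtain ⟨hT, heT⟩ := hmem1.1 hT
      obtain ⟨hT', heT'⟩ := hmem1.1 hT'
      obtain ⟨y, hy, hnew⟩ := hcoex T hT T' hT' x hx
      have hye : y ≠ e := by rintro rfl; exact (Finset.mem_sdiff.1 hy).2 heT'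
      refine ⟨y, hy, hmem1.2 ⟨hnew, ?_⟩⟩
      exact Finset.mem_insert_of_mem (Finset.mem_erase.2 ⟨Ne.symm hye, heT⟩)
    -- hypotheses for the recursive call on 𝒯₀
    have hsub0 : ∀ T ∈ 𝒯₀, F ⊆ T ∧ T ⊆ E.erase e ∪ F := by
      intro T hT
      obtain ⟨hT, heT⟩ := hmem0.1 hT
      refine ⟨(hFT T hT).1, ?_⟩
      intro x hx
      have hxe : x ≠ e := by rintro rfl; exact heT hx
      rcases Finset.mem_union.1 ((hFT T hT).2 hx) with hxE | hxF
      · exact Finset.mem_union_left _ (Finset.mem_erase.2 ⟨hxe, hxE⟩)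
      · exact Finset.mem_union_right _ hxF
    have hex0 : ∀ T ∈ 𝒯₀, ∀ T' ∈ 𝒯₀, ∀ x ∈ T \ T',
        ∃ y ∈ T' \ T, insert y (T.erase x) ∈ 𝒯₀ := by
      intro T hT T' hT' x hx
      obtain ⟨hT, heT⟩ := hmem0.1 hT
      obtain ⟨hT', heT'⟩ := hmem0.1 hT'
      obtain ⟨y, hy, hnew⟩ := hex T hT T' hT' x hx
      have hye : y ≠ e := by rintro rfl; exact heT' (Finset.mem_sdiff.1 hy).1
      refine ⟨y, hy, hmem0.2 ⟨hnew, ?_⟩⟩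
      intro hmem
      rcases Finset.mem_insert.1 hmem with h | h
      · exact hye h.symm
      · exact heT (Finset.mem_of_mem_erase h)
    have hcoex0 : ∀ T ∈ 𝒯₀, ∀ T' ∈ 𝒯₀, ∀ x ∈ T' \ T,
        ∃ y ∈ T \ T', insert x (T.erase y) ∈ 𝒯₀ := by
      intro T hT T' hT' x hx
      obtain ⟨hT, heT⟩ := hmem0.1 hT
      obtain ⟨hT', heT'⟩ := hmem0.1 hT'
      obtain ⟨y, hy, hnew⟩ := hcoex T hT T' hT' x hx
      have hxe : x ≠ e := by rintro rfl; exact heT' (Finset.mem_sdiff.1 hx).1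
      refine ⟨y, hy, hmem0.2 ⟨hnew, ?_⟩⟩
      intro hmem
      rcases Finset.mem_insert.1 hmem with h | h
      · exact hxe h.symm
      · exact heT (Finset.mem_of_mem_erase h)
    -- the filter on large labels is constant over 𝒯
    have hconstfilter : ∀ k, ℓ e ≤ k → ∀ T ∈ 𝒯,
        T.filter (fun x => k < ℓ x) = F.filter (fun x => k < ℓ x) := by
      intro k hk T hT
      ext z
      simp only [Finset.mem_filter]
      constructor
      · rintro ⟨hzT, hz⟩
        refine ⟨?_, hz⟩
        rcases Finset.mem_union.1 ((hFT T hT).2 hzT) with hzE | hzF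
        · exact absurd hz (by have := hmax z hzE; omega)
        · exact hzF
      · rintro ⟨hzF, hz⟩; exact ⟨(hFT T hT).1 hzF, hz⟩
    -- filters of trees with e and without e differ for small k
    have hdiff : ∀ k, k < ℓ e → ∀ {T T' : Finset (Sym2 V)}, e ∈ T → e ∉ T' →
        T.filter (fun x => k < ℓ x) ≠ T'.filter (fun x => k < ℓ x) := by
      intro k hk T T' heT heT' h
      have h1 : e ∈ T.filter (fun x => k < ℓ x) := Finset.mem_filter.2 ⟨heT, hk⟩
      rw [h] at h1
      exact heT' (Finset.mem_filter.1 h1).1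
    by_cases h0 : e ∈ T0
    · -- T0 contains e : list 𝒯₁ first
      have hT01 : T0 ∈ 𝒯₁ := hmem1.2 ⟨hT0, h0⟩
      obtain ⟨L1, hL1head, hL1nd, hL1mem, hL1gen, hL1chain⟩ :=
        ih (E.erase e) hE'ss (insert e F) 𝒯₁ hsub1 hex1 hcoex1 T0 hT01
      have hL1ne : L1 ≠ [] := by
        intro h; rw [h] at hL1head; simp at hL1head
      by_cases h𝒯₀ : 𝒯₀.Nonempty
      · obtain ⟨T', hT'⟩ := h𝒯₀
        set Tlast := L1.getLast hL1ne with hTlastdef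
        have hTlastmem : Tlast ∈ 𝒯₁ := (hL1mem Tlast).1 (L1.getLast_mem hL1ne)
        obtain ⟨hTlast𝒯, heTlast⟩ := hmem1.1 hTlastmem
        obtain ⟨hT'𝒯, heT'⟩ := hmem0.1 hT'
        have hxmem : e ∈ Tlast \ T' := Finset.mem_sdiff.2 ⟨heTlast, heT'⟩
        obtain ⟨f, hf, hnext⟩ := hex Tlast hTlast𝒯 T' hT'𝒯 e hxmem
        obtain ⟨hfT', hfTlast⟩ := Finset.mem_sdiff.1 hf
        set Tnext := insert f (Tlast.erase e) with hTnextdef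
        have hfe : f ≠ e := by rintro rfl; exact hfTlast heTlast
        have heTnext : e ∉ Tnext := by
          intro h
          rcases Finset.mem_insert.1 h with h | h
          · exact hfe h.symm
          · exact (Finset.mem_erase.1 h).1 rfl
        have hTnext0 : Tnext ∈ 𝒯₀ := hmem0.2 ⟨hnext, heTnext⟩
        obtain ⟨L0, hL0head, hL0nd, hL0mem, hL0gen, hL0chain⟩ :=
          ih (E.erase e) hE'ss F 𝒯₀ hsub0 hex0 hcoex0 Tnext hTnext0
        refine ⟨L1 ++ L0, ?_, ?_, ?_, ?_, ?_⟩
        · obtain ⟨a, t, rfl⟩ := List.exists_cons_of_ne_nil hL1ne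
          simp only [List.head?_cons, Option.some.injEq] at hL1head
          simp [hL1head]
        · rw [List.nodup_append]
          refine ⟨hL1nd, hL0nd, ?_⟩
          intro a ha b hb hab
          subst hab
          have h1 := (hmem1.1 ((hL1mem a).1 ha)).2
          have h2 := (hmem0.1 ((hL0mem a).1 hb)).2
          exact h2 h1
        · intro T
          rw [List.mem_append, hL1mem, hL0mem]
          constructor
          · rintro (h | h)
            · exact (hmem1.1 h).1
            · exact (hmem0.1 h).1
          · intro h
            by_cases he : e ∈ T
            · exact Or.inl (hmem1.2 ⟨h, he⟩)
            · exact Or.inr (hmem0.2 ⟨h, he⟩)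
        · refine isGenlex_append hL1gen hL0gen ?_
          intro k
          by_cases hk : k < ℓ e
          · left
            intro T hT T' hT'
            exact hdiff k hk (hmem1.1 ((hL1mem T).1 hT)).2
              (hmem0.1 ((hL0mem T').1 hT')).2
          · right
            intro T hT T' hT'
            have hT𝒯 : T ∈ 𝒯 := by
              rcases List.mem_append.1 hT with h | h
              · exact (hmem1.1 ((hL1mem T).1 h)).1
              · exact (hmem0.1 ((hL0mem T).1 h)).1
            have hT'𝒯 : T' ∈ 𝒯 := by
              rcases List.mem_append.1 hT' with h | h
              · exact (hmem1.1 ((hL1mem T').1 h)).1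
              · exact (hmem0.1 ((hL0mem T').1 h)).1
            rw [hconstfilter k (le_of_not_gt hk) T hT𝒯,
              hconstfilter k (le_of_not_gt hk) T' hT'𝒯]
        · refine List.IsChain.append hL1chain hL0chain ?_
          intro x hx y hy
          rw [List.getLast?_eq_getLast hL1ne, Option.mem_some_iff] at hx
          have hL0ne : L0 ≠ [] := by
            intro h; rw [h] at hL0head; simp at hL0head
          obtain ⟨a, t, rfl⟩ := List.exists_cons_of_ne_nil hL0ne
          simp only [List.head?_cons, Option.some.injEq] at hL0head
          simp only [List.head?_cons, Option.mem_some_iff] at hy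
          subst hx hy hL0head
          exact symmDiff_card_two heTlast hfTlast
      · -- 𝒯₀ is empty
        refine ⟨L1, hL1head, hL1nd, ?_, hL1gen, hL1chain⟩
        intro T
        rw [hL1mem]
        constructor
        · intro h; exact (hmem1.1 h).1
        · intro h
          refine hmem1.2 ⟨h, ?_⟩
          by_contra he
          exact h𝒯₀ ⟨T, hmem0.2 ⟨h, he⟩⟩
    · -- T0 does not contain e : list 𝒯₀ first
      have hT00 : T0 ∈ 𝒯₀ := hmem0.2 ⟨hT0, h0⟩
      obtain ⟨L0, hL0head, hL0nd, hL0mem, hL0gen, hL0chain⟩ :=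
        ih (E.erase e) hE'ss F 𝒯₀ hsub0 hex0 hcoex0 T0 hT00
      have hL0ne : L0 ≠ [] := by
        intro h; rw [h] at hL0head; simp at hL0head
      by_cases h𝒯₁ : 𝒯₁.Nonempty
      · obtain ⟨T', hT'⟩ := h𝒯₁
        set Tlast := L0.getLast hL0ne with hTlastdef
        have hTlastmem : Tlast ∈ 𝒯₀ := (hL0mem Tlast).1 (L0.getLast_mem hL0ne)
        obtain ⟨hTlast𝒯, heTlast⟩ := hmem0.1 hTlastmem
        obtain ⟨hT'𝒯, heT'⟩ := hmem1.1 hT'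
        have hxmem : e ∈ T' \ Tlast := Finset.mem_sdiff.2 ⟨heT', heTlast⟩
        obtain ⟨f, hf, hnext⟩ := hcoex Tlast hTlast𝒯 T' hT'𝒯 e hxmem
        obtain ⟨hfTlast, hfT'⟩ := Finset.mem_sdiff.1 hf
        set Tnext := insert e (Tlast.erase f) with hTnextdef
        have heTnext : e ∈ Tnext := Finset.mem_insert_self _ _
        have hTnext1 : Tnext ∈ 𝒯₁ := hmem1.2 ⟨hnext, heTnext⟩
        obtain ⟨L1, hL1head, hL1nd, hL1mem, hL1gen, hL1chain⟩ :=
          ih (E.erase e) hE'ss (insert e F) 𝒯₁ hsub1 hex1 hcoex1 Tnext hTnext1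
        refine ⟨L0 ++ L1, ?_, ?_, ?_, ?_, ?_⟩
        · obtain ⟨a, t, rfl⟩ := List.exists_cons_of_ne_nil hL0ne
          simp only [List.head?_cons, Option.some.injEq] at hL0head
          simp [hL0head]
        · rw [List.nodup_append]
          refine ⟨hL0nd, hL1nd, ?_⟩
          intro a ha b hb hab
          subst hab
          have h1 := (hmem0.1 ((hL0mem a).1 ha)).2
          have h2 := (hmem1.1 ((hL1mem a).1 hb)).2
          exact h1 h2
        · intro T
          rw [List.mem_append, hL0mem, hL1mem]
          constructor
          · rintro (h | h)
            · exact (hmem0.1 h).1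
            · exact (hmem1.1 h).1
          · intro h
            by_cases he : e ∈ T
            · exact Or.inr (hmem1.2 ⟨h, he⟩)
            · exact Or.inl (hmem0.2 ⟨h, he⟩)
        · refine isGenlex_append hL0gen hL1gen ?_
          intro k
          by_cases hk : k < ℓ e
          · left
            intro T hT T' hT'
            exact (hdiff k hk (hmem1.1 ((hL1mem T').1 hT')).2
              (hmem0.1 ((hL0mem T).1 hT)).2).symm
          · right
            intro T hT T' hT'
            have hT𝒯 : T ∈ 𝒯 := by
              rcases List.mem_append.1 hT with h | h
              · exact (hmem0.1 ((hL0mem T).1 h)).1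
              · exact (hmem1.1 ((hL1mem T).1 h)).1
            have hT'𝒯 : T' ∈ 𝒯 := by
              rcases List.mem_append.1 hT' with h | h
              · exact (hmem0.1 ((hL0mem T').1 h)).1
              · exact (hmem1.1 ((hL1mem T').1 h)).1
            rw [hconstfilter k (le_of_not_gt hk) T hT𝒯,
              hconstfilter k (le_of_not_gt hk) T' hT'𝒯]
        · refine List.IsChain.append hL0chain hL1chain ?_
          intro x hx y hy
          rw [List.getLast?_eq_getLast hL0ne, Option.mem_some_iff] at hx
          have hL1ne : L1 ≠ [] := by
            intro h; rw [h] at hL1head; simp at hL1head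
          obtain ⟨a, t, rfl⟩ := List.exists_cons_of_ne_nil hL1ne
          simp only [List.head?_cons, Option.some.injEq] at hL1head
          simp only [List.head?_cons, Option.mem_some_iff] at hy
          subst hx hy hL1head
          exact symmDiff_card_two hfTlast heTlast
      · refine ⟨L0, hL0head, hL0nd, ?_, hL0gen, hL0chain⟩
        intro T
        rw [hL0mem]
        constructor
        · intro h; exact (hmem0.1 h).1
        · intro h
          refine hmem0.2 ⟨h, ?_⟩
          by_contra he
          exact h𝒯₁ ⟨T, hmem1.2 ⟨h, he⟩⟩

end Key

section Graph

open SimpleGraph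

variable {V : Type*} [DecidableEq V]

lemma reach_split_aux {T : Finset (Sym2 V)} {a b : V} (hab : s(a, b) ∈ T) {w z : V}
    (p : (fromEdgeSet (↑T : Set (Sym2 V))).Walk w z) :
    (fromEdgeSet (↑(T.erase s(a, b)) : Set (Sym2 V))).Reachable w z ∨
      ((fromEdgeSet (↑(T.erase s(a, b)) : Set (Sym2 V))).Reachable w a ∧
        (fromEdgeSet (↑(T.erase s(a, b)) : Set (Sym2 V))).Reachable z b) ∨
      ((fromEdgeSet (↑(T.erase s(a, b)) : Set (Sym2 V))).Reachable w b ∧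
        (fromEdgeSet (↑(T.erase s(a, b)) : Set (Sym2 V))).Reachable z a) := by
  induction p with
  | nil => exact Or.inl (Reachable.refl _)
  | @cons w x z h q ih =>
    rw [fromEdgeSet_adj] at h
    by_cases hx : s(w, x) = s(a, b)
    · rw [Sym2.eq_iff] at hx
      rcases hx with ⟨rfl, rfl⟩ | ⟨rfl, rfl⟩
      · -- w = a, x = b
        rcases ih with h' | ⟨h1, h2⟩ | ⟨h1, h2⟩
        · exact Or.inr (Or.inl ⟨Reachable.refl _, h'.symm⟩)
        · exact Or.inr (Or.inl ⟨Reachable.refl _, h2⟩)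
        · exact Or.inl h2.symm
      · -- w = b, x = a
        rcases ih with h' | ⟨h1, h2⟩ | ⟨h1, h2⟩
        · exact Or.inr (Or.inr ⟨Reachable.refl _, h'.symm⟩)
        · exact Or.inl h2.symm
        · exact Or.inl (h1.symm.trans h2.symm)
    · have hadj : (fromEdgeSet (↑(T.erase s(a, b)) : Set (Sym2 V))).Adj w x := by
        rw [fromEdgeSet_adj]
        refine ⟨?_, h.2⟩
        exact_mod_cast Finset.mem_erase.2 ⟨hx, by exact_mod_cast h.1⟩
      rcases ih with h' | ⟨h1, h2⟩ | ⟨h1, h2⟩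
      · exact Or.inl (hadj.reachable.trans h')
      · exact Or.inr (Or.inl ⟨hadj.reachable.trans h1, h2⟩)
      · exact Or.inr (Or.inr ⟨hadj.reachable.trans h1, h2⟩)

lemma reach_split {T : Finset (Sym2 V)} {a b : V} (hab : s(a, b) ∈ T) {w : V}
    (p : (fromEdgeSet (↑T : Set (Sym2 V))).Walk w a) :
    (fromEdgeSet (↑(T.erase s(a, b)) : Set (Sym2 V))).Reachable w a ∨
      (fromEdgeSet (↑(T.erase s(a, b)) : Set (Sym2 V))).Reachable w b := by
  rcases reach_split_aux hab p with h | ⟨h1, _⟩ | ⟨h1, _⟩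
  · exact Or.inl h
  · exact Or.inl h1
  · exact Or.inr h1

lemma crossing {T' : Finset (Sym2 V)} (A : Set V) {u b : V}
    (p : (fromEdgeSet (↑T' : Set (Sym2 V))).Walk u b) :
    u ∈ A → b ∉ A → ∃ c d, s(c, d) ∈ T' ∧ c ∈ A ∧ d ∉ A := by
  induction p with
  | nil => intro hu hb; exact absurd hu hb
  | @cons u' v' w' h q ih =>
    intro hu hb
    by_cases hv : v' ∈ A
    · exact ih hv hb
    · rw [fromEdgeSet_adj] at h
      exact ⟨u', v', by exact_mod_cast h.1, hu, hv⟩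

lemma isAcyclic_mono' {G H : SimpleGraph V} (hle : H ≤ G) (hG : G.IsAcyclic) :
    H.IsAcyclic := by
  intro v c hc
  have hsub : ∀ e ∈ c.edges, e ∈ G.edgeSet := fun e he =>
    (edgeSet_mono hle) (c.edges_subset_edgeSet he)
  exact hG (c.transfer G hsub) (hc.transfer hsub)

lemma isAcyclic_sup_edge {G : SimpleGraph V} (hG : G.IsAcyclic) {u v : V} (hne : u ≠ v)
    (hnr : ¬G.Reachable u v) :
    (G ⊔ fromEdgeSet {s(u, v)}).IsAcyclic := by
  have hle : (G ⊔ fromEdgeSet {s(u, v)}) \ fromEdgeSet {s(u, v)} ≤ G := by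
    intro a b hab
    rw [sdiff_adj] at hab
    rcases (sup_adj _ _ _ _).1 hab.1 with h | h
    · exact h
    · exact absurd h hab.2
  have hadj : (G ⊔ fromEdgeSet {s(u, v)}).Adj u v := by
    rw [sup_adj]
    right
    rw [fromEdgeSet_adj]
    exact ⟨Set.mem_singleton _, hne⟩
  have hbridge : (G ⊔ fromEdgeSet {s(u, v)}).IsBridge s(u, v) := by
    rw [isBridge_iff]
    exact fun hr => hnr (hr.mono hle)
  intro w c hc
  have hnotmem : s(u, v) ∉ c.edges :=
    hbridge.notMem_edges_of_isCycle hc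
  have hsub : ∀ e ∈ c.edges, e ∈ G.edgeSet := by
    intro e he
    have hmem : e ∈ (G ⊔ fromEdgeSet {s(u, v)}).edgeSet := c.edges_subset_edgeSet he
    rw [edgeSet_sup] at hmem
    rcases hmem with h | h
    · exact h
    · rw [edgeSet_fromEdgeSet] at h
      obtain ⟨h1, -⟩ := h
      rw [Set.mem_singleton_iff] at h1
      exact absurd (h1 ▸ he) hnotmem
  exact hG (c.transfer G hsub) (hc.transfer hsub)

lemma connected_of_endpoints {H : SimpleGraph V} {a b : V} (hab : H.Reachable a b)
    (hall : ∀ w, H.Reachable w a ∨ H.Reachable w b) : H.Connected := by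
  have key : ∀ w, H.Reachable w a := by
    intro w
    rcases hall w with h | h
    · exact h
    · exact h.trans hab.symm
  have : Nonempty V := ⟨a⟩
  exact ⟨fun x y => (key x).trans (key y).symm⟩

lemma tree_not_reachable_erase {G : SimpleGraph V} {T : Finset (Sym2 V)}
    (hT : IsSpanningTree G T) {y : Sym2 V} {u v : V}
    (pP : (fromEdgeSet (↑T : Set (Sym2 V))).Walk u v) (hpP : pP.IsPath)
    (hy : y ∈ pP.edges) :
    ¬(fromEdgeSet (↑(T.erase y) : Set (Sym2 V))).Reachable u v := by
  intro hr
  obtain ⟨q⟩ := hr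
  have hle : fromEdgeSet (↑(T.erase y) : Set (Sym2 V)) ≤
      fromEdgeSet (↑T : Set (Sym2 V)) :=
    fromEdgeSet_mono (by exact_mod_cast Finset.erase_subset _ _)
  have hsub : ∀ e ∈ q.edges, e ∈ (fromEdgeSet (↑T : Set (Sym2 V))).edgeSet := fun e he =>
    (edgeSet_mono hle) (q.edges_subset_edgeSet he)
  have huniq := hT.2.2.path_unique ((q.transfer _ hsub).toPath) ⟨pP, hpP⟩
  have hyq' : y ∉ ((q.transfer _ hsub).toPath : (fromEdgeSet (↑T : Set (Sym2 V))).Walk u v).edges := by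
    intro hmem
    have h1 := SimpleGraph.Walk.edges_toPath_subset _ hmem
    rw [SimpleGraph.Walk.edges_transfer] at h1
    have h2 := q.edges_subset_edgeSet h1
    rw [edgeSet_fromEdgeSet] at h2
    have h3 : y ∈ (↑(T.erase y) : Set (Sym2 V)) := h2.1
    simp at h3
  rw [huniq] at hyq'
  exact hyq' hy

lemma spanningTree_exchange {G : SimpleGraph V} {T T' : Finset (Sym2 V)}
    (hT : IsSpanningTree G T) (hT' : IsSpanningTree G T') {x : Sym2 V}
    (hxT : x ∈ T) (hxT' : x ∉ T') :
    ∃ y, y ∈ T' ∧ y ∉ T ∧ IsSpanningTree G (insert y (T.erase x)) := by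
  induction x using Sym2.ind with
  | _ a b =>
  have hab : G.Adj a b := by
    rw [← SimpleGraph.mem_edgeSet]; exact hT.1 (by exact_mod_cast hxT)
  have hne : a ≠ b := hab.ne
  set H := fromEdgeSet (↑(T.erase s(a, b)) : Set (Sym2 V)) with hH
  set A : Set V := {w | H.Reachable w a} with hA
  have haA : a ∈ A := Reachable.refl a
  have hHle : H ≤ fromEdgeSet (↑T : Set (Sym2 V)) :=
    fromEdgeSet_mono (by exact_mod_cast Finset.erase_subset _ _)
  have hHac : H.IsAcyclic := isAcyclic_mono' hHle hT.2.2
  -- b is not reachable from a after deleting the edge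
  have hbA : b ∉ A := by
    intro hbA
    have hadjba : (fromEdgeSet (↑T : Set (Sym2 V))).Adj b a := by
      rw [fromEdgeSet_adj]
      refine ⟨?_, hne.symm⟩
      rw [Sym2.eq_swap]
      exact_mod_cast hxT
    have hpath : (SimpleGraph.Walk.cons hadjba SimpleGraph.Walk.nil).IsPath := by
      simp [SimpleGraph.Walk.cons_isPath_iff, hne.symm]
    have hmem : s(a, b) ∈ (SimpleGraph.Walk.cons hadjba SimpleGraph.Walk.nil).edges := by
      simp [Sym2.eq_swap]
    exact tree_not_reachable_erase hT (SimpleGraph.Walk.cons hadjba SimpleGraph.Walk.nil)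
      hpath hmem (hbA : H.Reachable b a)
  obtain ⟨p⟩ := hT'.2.1.preconnected a b
  obtain ⟨c, d, hcd, hcA, hdA⟩ := crossing A p haA hbA
  have hcdne : c ≠ d := by rintro rfl; exact hdA hcA
  have hyT : s(c, d) ∉ T := by
    intro hmem
    have hne' : s(c, d) ≠ s(a, b) := by
      intro h; rw [h] at hcd; exact hxT' hcd
    have hadj : H.Adj c d := by
      rw [hH, fromEdgeSet_adj]
      refine ⟨?_, hcdne⟩
      exact_mod_cast Finset.mem_erase.2 ⟨hne', hmem⟩
    exact hdA ((hadj.symm.reachable).trans hcA)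
  have hGnew : fromEdgeSet (↑(insert s(c, d) (T.erase s(a, b))) : Set (Sym2 V)) =
      H ⊔ fromEdgeSet {s(c, d)} := by
    rw [hH, ← fromEdgeSet_union]
    congr 1
    push_cast
    rw [Set.insert_eq, Set.union_comm]
  have hcd_nr : ¬H.Reachable c d := fun h => hdA (h.symm.trans hcA)
  have hle2 : H ≤ fromEdgeSet (↑(insert s(c, d) (T.erase s(a, b))) : Set (Sym2 V)) := by
    rw [hGnew]; exact le_sup_left
  refine ⟨s(c, d), hcd, hyT, ?_, ?_, ?_⟩
  · intro z hz
    rcases Finset.mem_insert.1 (by exact_mod_cast hz) with h | h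
    · exact h ▸ hT'.1 (by exact_mod_cast hcd)
    · exact hT.1 (by exact_mod_cast (Finset.mem_of_mem_erase h))
  · -- connected
    have hadjcd : (fromEdgeSet (↑(insert s(c, d) (T.erase s(a, b))) : Set (Sym2 V))).Adj c d := by
      rw [fromEdgeSet_adj]
      refine ⟨?_, hcdne⟩
      exact_mod_cast Finset.mem_insert_self _ _
    have hall : ∀ w, (fromEdgeSet (↑(insert s(c, d) (T.erase s(a, b))) : Set (Sym2 V))).Reachable w a ∨
        (fromEdgeSet (↑(insert s(c, d) (T.erase s(a, b))) : Set (Sym2 V))).Reachable w b := by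
      intro w
      obtain ⟨pw⟩ := hT.2.1.preconnected w a
      rcases reach_split (by exact_mod_cast hxT) pw with h | h
      · exact Or.inl (h.mono hle2)
      · exact Or.inr (h.mono hle2)
    have hdb : H.Reachable d b := by
      obtain ⟨pd⟩ := hT.2.1.preconnected d a
      rcases reach_split (by exact_mod_cast hxT) pd with h | h
      · exact absurd h hdA
      · exact h
    have habr : (fromEdgeSet (↑(insert s(c, d) (T.erase s(a, b))) : Set (Sym2 V))).Reachable a b :=
      (((hcA : H.Reachable c a).mono hle2).symm.trans hadjcd.reachable).trans
        ((hdb.mono hle2))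
    exact connected_of_endpoints habr hall
  · rw [hGnew]
    exact isAcyclic_sup_edge hHac hcdne hcd_nr

end Graph

section Coexchange

open SimpleGraph

variable {V : Type*} [DecidableEq V]

lemma spanningTree_coexchange {G : SimpleGraph V} {T T' : Finset (Sym2 V)}
    (hT : IsSpanningTree G T) (hT' : IsSpanningTree G T') {x : Sym2 V}
    (hxT' : x ∈ T') (hxT : x ∉ T) :
    ∃ y, y ∈ T ∧ y ∉ T' ∧ IsSpanningTree G (insert x (T.erase y)) := by
  induction x using Sym2.ind with
  | _ u v =>
  have huv : G.Adj u v := by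
    rw [← SimpleGraph.mem_edgeSet]; exact hT'.1 (by exact_mod_cast hxT')
  have hne : u ≠ v := huv.ne
  obtain ⟨p0⟩ := hT.2.1.preconnected u v
  set p := p0.toPath with hpdef
  -- there is an edge of p not in T'
  have hyex : ∃ c d, s(c, d) ∈ (p : (fromEdgeSet (↑T : Set (Sym2 V))).Walk u v).edges ∧
      s(c, d) ∉ T' := by
    by_contra hcon
    push_neg at hcon
    have hcon' : ∀ y ∈ (p : (fromEdgeSet (↑T : Set (Sym2 V))).Walk u v).edges, y ∈ T' := by
      intro y hy
      induction y using Sym2.ind with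
      | _ c d => exact hcon c d hy
    have hsub : ∀ e ∈ (p : (fromEdgeSet (↑T : Set (Sym2 V))).Walk u v).edges,
        e ∈ (fromEdgeSet (↑T' : Set (Sym2 V))).edgeSet := by
      intro e he
      rw [edgeSet_fromEdgeSet]
      refine ⟨by exact_mod_cast hcon' e he, ?_⟩
      have h2 := (p : (fromEdgeSet (↑T : Set (Sym2 V))).Walk u v).edges_subset_edgeSet he
      rw [edgeSet_fromEdgeSet] at h2
      exact h2.2
    have hqPath : ((p : (fromEdgeSet (↑T : Set (Sym2 V))).Walk u v).transfer _ hsub).IsPath :=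
      p.2.transfer hsub
    have hadj : (fromEdgeSet (↑T' : Set (Sym2 V))).Adj v u := by
      rw [fromEdgeSet_adj]
      refine ⟨?_, hne.symm⟩
      rw [Sym2.eq_swap]
      exact_mod_cast hxT'
    have hnm : s(v, u) ∉
        ((p : (fromEdgeSet (↑T : Set (Sym2 V))).Walk u v).transfer _ hsub).edges := by
      rw [SimpleGraph.Walk.edges_transfer]
      intro hmem
      have h2 := (p : (fromEdgeSet (↑T : Set (Sym2 V))).Walk u v).edges_subset_edgeSet hmem
      rw [edgeSet_fromEdgeSet] at h2
      have h3 : s(v, u) ∈ (↑T : Set (Sym2 V)) := h2.1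
      rw [Sym2.eq_swap] at h3
      exact hxT (by exact_mod_cast h3)
    have hcyc := SimpleGraph.Path.cons_isCycle
      ⟨(p : (fromEdgeSet (↑T : Set (Sym2 V))).Walk u v).transfer _ hsub, hqPath⟩ hadj hnm
    exact hT'.2.2 _ hcyc
  obtain ⟨c, d, hyp, hyT'⟩ := hyex
  have hyT : s(c, d) ∈ T := by
    have h2 := (p : (fromEdgeSet (↑T : Set (Sym2 V))).Walk u v).edges_subset_edgeSet hyp
    rw [edgeSet_fromEdgeSet] at h2
    exact_mod_cast h2.1
  have hnr : ¬(fromEdgeSet (↑(T.erase s(c, d)) : Set (Sym2 V))).Reachable u v :=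
    tree_not_reachable_erase hT (p : (fromEdgeSet (↑T : Set (Sym2 V))).Walk u v) p.2 hyp
  set H := fromEdgeSet (↑(T.erase s(c, d)) : Set (Sym2 V)) with hH
  have hHle : H ≤ fromEdgeSet (↑T : Set (Sym2 V)) :=
    fromEdgeSet_mono (by exact_mod_cast Finset.erase_subset _ _)
  have hHac : H.IsAcyclic := isAcyclic_mono' hHle hT.2.2
  have hGnew : fromEdgeSet (↑(insert s(u, v) (T.erase s(c, d))) : Set (Sym2 V)) =
      H ⊔ fromEdgeSet {s(u, v)} := by
    rw [hH, ← fromEdgeSet_union]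
    congr 1
    push_cast
    rw [Set.insert_eq, Set.union_comm]
  have hle2 : H ≤ fromEdgeSet (↑(insert s(u, v) (T.erase s(c, d))) : Set (Sym2 V)) := by
    rw [hGnew]; exact le_sup_left
  have hadjuv : (fromEdgeSet (↑(insert s(u, v) (T.erase s(c, d))) : Set (Sym2 V))).Adj u v := by
    rw [fromEdgeSet_adj]
    refine ⟨?_, hne⟩
    exact_mod_cast Finset.mem_insert_self _ _
  -- u and v reach the two sides
  have hu := fun (pw : (fromEdgeSet (↑T : Set (Sym2 V))).Walk u c) => reach_split hyT pw
  obtain ⟨pu⟩ := hT.2.1.preconnected u c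
  obtain ⟨pv⟩ := hT.2.1.preconnected v c
  have hus := reach_split hyT pu
  have hvs := reach_split hyT pv
  have hall : ∀ w, (fromEdgeSet (↑(insert s(u, v) (T.erase s(c, d))) : Set (Sym2 V))).Reachable w c ∨
      (fromEdgeSet (↑(insert s(u, v) (T.erase s(c, d))) : Set (Sym2 V))).Reachable w d := by
    intro w
    obtain ⟨pw⟩ := hT.2.1.preconnected w c
    rcases reach_split hyT pw with h | h
    · exact Or.inl (h.mono hle2)
    · exact Or.inr (h.mono hle2)
  have hcdr : (fromEdgeSet (↑(insert s(u, v) (T.erase s(c, d))) : Set (Sym2 V))).Reachable c d := by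
    rcases hus with hu1 | hu1 <;> rcases hvs with hv1 | hv1
    · exact absurd (hu1.trans hv1.symm) hnr
    · exact ((hu1.mono hle2).symm.trans hadjuv.reachable).trans (hv1.mono hle2)
    · exact ((hv1.mono hle2).symm.trans hadjuv.reachable.symm).trans (hu1.mono hle2)
    · exact absurd (hu1.trans hv1.symm) hnr
  refine ⟨s(c, d), hyT, hyT', ?_, ?_, ?_⟩
  · intro z hz
    rcases Finset.mem_insert.1 (by exact_mod_cast hz) with h | h
    · exact h ▸ hT'.1 (by exact_mod_cast hxT')
    · exact hT.1 (by exact_mod_cast (Finset.mem_of_mem_erase h))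
  · exact connected_of_endpoints hcdr hall
  · rw [hGnew]
    exact isAcyclic_sup_edge hHac hne hnr

end Coexchange

/-- For any finite connected simple graph `G` with `m` edges, any bijective edge
labeling `ℓ : E(G) → {1, …, m}`, and any spanning tree `T̂` of `G`, there is a listing
of all spanning trees of `G`, each exactly once, starting with `T̂`, that is genlex
with respect to `ℓ` and in which any two consecutive trees differ in an edge exchange. -/
theorem genlex_edge_exchange_gray_code {V : Type*} [Fintype V] [DecidableEq V]
    (G : SimpleGraph V) (hG : G.Connected) (m : ℕ) (hm : G.edgeSet.ncard = m)
    (ℓ : Sym2 V → ℕ) (hbij : Set.BijOn ℓ G.edgeSet (Set.Icc 1 m))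
    (T0 : Finset (Sym2 V)) (hT0 : IsSpanningTree G T0) :
    ∃ L : List (Finset (Sym2 V)),
      L.head? = some T0 ∧
      L.Nodup ∧
      (∀ T, T ∈ L ↔ IsSpanningTree G T) ∧
      IsGenlex ℓ L ∧
      L.Chain' (fun T T' => (symmDiff T T').card = 2) := by
  classical
  have hfin : {T : Finset (Sym2 V) | IsSpanningTree G T}.Finite := Set.toFinite _
  set 𝒯 : Finset (Finset (Sym2 V)) := hfin.toFinset with h𝒯
  have h𝒯mem : ∀ {T}, T ∈ 𝒯 ↔ IsSpanningTree G T := by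
    intro T; rw [h𝒯, Set.Finite.mem_toFinset]; rfl
  have hEfin : G.edgeSet.Finite := Set.toFinite _
  set E : Finset (Sym2 V) := hEfin.toFinset with hE
  have hsub : ∀ T ∈ 𝒯, (∅ : Finset (Sym2 V)) ⊆ T ∧ T ⊆ E ∪ ∅ := by
    intro T hT
    refine ⟨Finset.empty_subset _, ?_⟩
    rw [Finset.union_empty]
    intro z hz
    rw [hE, Set.Finite.mem_toFinset]
    exact (h𝒯mem.1 hT).1 (Finset.mem_coe.2 hz)
  have hex : ∀ T ∈ 𝒯, ∀ T' ∈ 𝒯, ∀ x ∈ T \ T',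
      ∃ y ∈ T' \ T, insert y (T.erase x) ∈ 𝒯 := by
    intro T hT T' hT' x hx
    rw [Finset.mem_sdiff] at hx
    obtain ⟨y, h1, h2, h3⟩ :=
      spanningTree_exchange (h𝒯mem.1 hT) (h𝒯mem.1 hT') hx.1 hx.2
    exact ⟨y, Finset.mem_sdiff.2 ⟨h1, h2⟩, h𝒯mem.2 h3⟩
  have hcoex : ∀ T ∈ 𝒯, ∀ T' ∈ 𝒯, ∀ x ∈ T' \ T,
      ∃ y ∈ T \ T', insert x (T.erase y) ∈ 𝒯 := by
    intro T hT T' hT' x hx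
    rw [Finset.mem_sdiff] at hx
    obtain ⟨y, h1, h2, h3⟩ :=
      spanningTree_coexchange (h𝒯mem.1 hT) (h𝒯mem.1 hT') hx.1 hx.2
    exact ⟨y, Finset.mem_sdiff.2 ⟨h1, h2⟩, h𝒯mem.2 h3⟩
  obtain ⟨L, h1, h2, h3, h4, h5⟩ :=
    key_abstract ℓ E ∅ 𝒯 hsub hex hcoex T0 (h𝒯mem.2 hT0)
  exact ⟨L, h1, h2, fun T => (h3 T).trans h𝒯mem, h4, h5⟩
end

section
/- Let G be a finite connected simple graph having at least 3 spanning trees, and let T, T' be two spanning trees of G that differ in an edge exchange. Then there is a cyclic listing T_1, …, T_N of all spanning trees of G, each appearing exactly once, such that any two cyclically consecutive trees differ in an edge exchange and such that T and T' appear at consecutive positions; equivalently, the spanning tree flip graph of G admits a Hamilton cycle through any prescribed edge. -/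
/-- Two spanning trees differ in an edge exchange: their symmetric difference consists
of exactly two edges. -/
def ExchangeStep {V : Type*} [DecidableEq V] (T T' : Finset (Sym2 V)) : Prop :=
  (symmDiff T T').card = 2


section Abstract

variable {α : Type*} [DecidableEq α]

def sw (a b : α) (A : Finset α) : Finset α := insert b (A.erase a)

def EStep (A B : Finset α) : Prop := (symmDiff A B).card = 2

lemma EStep.symm {A B : Finset α} (h : EStep A B) : EStep B A := by
  unfold EStep at *; rwa [symmDiff_comm]

lemma mem_sw {a b x : α} {A : Finset α} : x ∈ sw a b A ↔ x = b ∨ (x ∈ A ∧ x ≠ a) := by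
  simp only [sw, Finset.mem_insert, Finset.mem_erase]; tauto

lemma estep_of_sdiff {A B : Finset α} {a b : α} (h1 : A \ B = {a}) (h2 : B \ A = {b}) :
    EStep A B := by
  have hd : Disjoint (A \ B) (B \ A) := disjoint_sdiff_sdiff
  unfold EStep
  rw [symmDiff_def, Finset.sup_eq_union, Finset.card_union_of_disjoint hd, h1, h2]
  rfl

lemma sdiff_sw_right {a b : α} {A : Finset α} (hb : b ∉ A) :
    sw a b A \ A = {b} := by
  ext z
  simp only [mem_sw, Finset.mem_sdiff, Finset.mem_singleton]
  constructor
  · rintro ⟨h | ⟨h1, h2⟩, h3⟩ <;> tauto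
  · rintro rfl; tauto

lemma sdiff_sw_left {a b : α} {A : Finset α} (ha : a ∈ A) (hb : b ∉ A) :
    A \ sw a b A = {a} := by
  ext z
  simp only [mem_sw, Finset.mem_sdiff, Finset.mem_singleton]
  constructor
  · rintro ⟨h1, h2⟩
    by_contra hz
    exact h2 (Or.inr ⟨h1, hz⟩)
  · rintro rfl
    refine ⟨ha, ?_⟩
    rintro (rfl | ⟨-, h⟩) <;> tauto

lemma estep_sw {a b : α} {A : Finset α} (ha : a ∈ A) (hb : b ∉ A) : EStep A (sw a b A) :=
  estep_of_sdiff (sdiff_sw_left ha hb) (sdiff_sw_right hb)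

/-- same removal, different insertions -/
lemma estep_sw_sw_ins {a b c : α} {A : Finset α} (ha : a ∈ A) (hb : b ∉ A) (hc : c ∉ A)
    (hbc : b ≠ c) : EStep (sw a b A) (sw a c A) := by
  refine estep_of_sdiff (a := b) (b := c) ?_ ?_ <;>
  · ext z
    simp only [mem_sw, Finset.mem_sdiff, Finset.mem_singleton]
    constructor
    · rintro ⟨rfl | ⟨h1, h2⟩, h3⟩ <;> tauto
    · rintro rfl; tauto

/-- same insertion, different removals -/
lemma estep_sw_sw_rem {a b c : α} {A : Finset α} (ha : a ∈ A) (hc : c ∈ A) (hac : a ≠ c)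
    (hb : b ∉ A) : EStep (sw a b A) (sw c b A) := by
  refine estep_of_sdiff (a := c) (b := a) ?_ ?_ <;>
  · ext z
    simp only [mem_sw, Finset.mem_sdiff, Finset.mem_singleton]
    constructor
    · rintro ⟨rfl | ⟨h1, h2⟩, h3⟩
      · tauto
      · by_contra hz; exact h3 (Or.inr ⟨h1, hz⟩)
    · rintro rfl
      constructor
      · tauto
      · rintro (rfl | ⟨h1, h2⟩) <;> tauto

lemma estep_decomp {A B : Finset α} (hcard : A.card = B.card) (h : EStep A B) :
    ∃ a b, a ∈ A ∧ a ∉ B ∧ b ∈ B ∧ b ∉ A ∧ B = sw a b A := by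
  have hAB : (A \ B).card = (B \ A).card := by
    have h1 := Finset.card_sdiff_add_card_inter A B
    have h2 := Finset.card_sdiff_add_card_inter B A
    rw [Finset.inter_comm] at h2
    omega
  have h2 : (A \ B).card + (B \ A).card = 2 := by
    have hd : Disjoint (A \ B) (B \ A) := disjoint_sdiff_sdiff
    unfold EStep at h
    rwa [symmDiff_def, Finset.sup_eq_union, Finset.card_union_of_disjoint hd] at h
  obtain ⟨a, ha⟩ := Finset.card_eq_one.mp (show (A \ B).card = 1 by omega)
  obtain ⟨b, hb⟩ := Finset.card_eq_one.mp (show (B \ A).card = 1 by omega)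
  have haA : a ∈ A ∧ a ∉ B := by
    have : a ∈ A \ B := ha ▸ Finset.mem_singleton_self a
    exact ⟨(Finset.mem_sdiff.mp this).1, (Finset.mem_sdiff.mp this).2⟩
  have hbB : b ∈ B ∧ b ∉ A := by
    have : b ∈ B \ A := hb ▸ Finset.mem_singleton_self b
    exact ⟨(Finset.mem_sdiff.mp this).1, (Finset.mem_sdiff.mp this).2⟩
  refine ⟨a, b, haA.1, haA.2, hbB.1, hbB.2, ?_⟩
  ext z
  rw [mem_sw]
  constructor
  · intro hz
    by_cases hzA : z ∈ A
    · right
      refine ⟨hzA, ?_⟩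
      rintro rfl; exact haA.2 hz
    · left
      have : z ∈ B \ A := Finset.mem_sdiff.mpr ⟨hz, hzA⟩
      rw [hb] at this; exact Finset.mem_singleton.mp this
  · rintro (rfl | ⟨hzA, hza⟩)
    · exact hbB.1
    · by_contra hzB
      have : z ∈ A \ B := Finset.mem_sdiff.mpr ⟨hzA, hzB⟩
      rw [ha] at this
      exact hza (Finset.mem_singleton.mp this)

lemma id1 {e p q : α} {T : Finset α} (he : e ∈ T) (hp : p ∈ T) (hpe : p ≠ e) (hq : q ∉ T) :
    sw e p (sw p q T) = sw e q T := by
  ext z; simp only [mem_sw]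
  rcases eq_or_ne z p with rfl | h1 <;> rcases eq_or_ne z q with rfl | h2 <;>
    rcases eq_or_ne z e with rfl | h3 <;> simp_all

lemma id3 {e f x : α} {T : Finset α} (he : e ∈ T) (hf : f ∉ T) (hx : x ∈ T) (hxe : x ≠ e) :
    sw x e (sw e f T) = sw x f T := by
  ext z; simp only [mem_sw]
  rcases eq_or_ne z x with rfl | h1 <;> rcases eq_or_ne z e with rfl | h2 <;>
    rcases eq_or_ne z f with rfl | h3 <;> simp_all

lemma id5 {e p f q : α} {T : Finset α} (he : e ∈ T) (hp : p ∈ T) (hpe : p ≠ e)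
    (hf : f ∉ T) (hq : q ∉ T) (hqf : q ≠ f) :
    sw p q (sw e f T) = sw e f (sw p q T) := by
  ext z; simp only [mem_sw]
  rcases eq_or_ne z p with rfl | h1 <;> rcases eq_or_ne z q with rfl | h2 <;>
    rcases eq_or_ne z e with rfl | h3 <;> rcases eq_or_ne z f with rfl | h4 <;>
    simp_all

lemma id7 {e f x y : α} {T : Finset α} (he : e ∈ T) (hf : f ∉ T) (hx : x ∈ T) (hxe : x ≠ e)
    (hy : y ∉ T) (hyf : y ≠ f) (hye : y ≠ e) :
    sw f e (sw x y (sw e f T)) = sw x y T := by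
  ext z; simp only [mem_sw]
  rcases eq_or_ne z x with rfl | h1 <;> rcases eq_or_ne z y with rfl | h2 <;>
    rcases eq_or_ne z e with rfl | h3 <;> rcases eq_or_ne z f with rfl | h4 <;>
    simp_all

lemma id8 {e f x y : α} {T : Finset α} (he : e ∈ T) (hf : f ∉ T) (hx : x ∈ T) (hxe : x ≠ e)
    (hy : y ∉ T) (hyf : y ≠ f) (hye : y ≠ e) :
    sw f x (sw x y (sw e f T)) = sw e y T := by
  ext z; simp only [mem_sw]
  rcases eq_or_ne z x with rfl | h1 <;> rcases eq_or_ne z y with rfl | h2 <;>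
    rcases eq_or_ne z e with rfl | h3 <;> rcases eq_or_ne z f with rfl | h4 <;>
    simp_all

lemma id6a {e f x q : α} {T : Finset α} (he : e ∈ T) (hf : f ∉ T) (hx : x ∈ T) (hxe : x ≠ e)
    (hq : q ∉ T) (hqf : q ≠ f) :
    sw e f T \ sw x f (sw e q T) = {x} := by
  ext z; simp only [mem_sw, Finset.mem_sdiff, Finset.mem_singleton]
  rcases eq_or_ne z x with rfl | h1 <;> rcases eq_or_ne z q with rfl | h2 <;>
    rcases eq_or_ne z e with rfl | h3 <;> rcases eq_or_ne z f with rfl | h4 <;>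
    simp_all

lemma id6b {e f x q : α} {T : Finset α} (he : e ∈ T) (hf : f ∉ T) (hx : x ∈ T) (hxe : x ≠ e)
    (hq : q ∉ T) (hqf : q ≠ f) :
    sw x f (sw e q T) \ sw e f T = {q} := by
  ext z; simp only [mem_sw, Finset.mem_sdiff, Finset.mem_singleton]
  rcases eq_or_ne z x with rfl | h1 <;> rcases eq_or_ne z q with rfl | h2 <;>
    rcases eq_or_ne z e with rfl | h3 <;> rcases eq_or_ne z f with rfl | h4 <;>
    simp_all

lemma id9a {e f x y : α} {T : Finset α} (he : e ∈ T) (hf : f ∉ T) (hx : x ∈ T) (hxe : x ≠ e)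
    (hy : y ∉ T) (hyf : y ≠ f) :
    sw x y (sw e f T) \ sw e y T = {f} := by
  ext z; simp only [mem_sw, Finset.mem_sdiff, Finset.mem_singleton]
  rcases eq_or_ne z x with rfl | h1 <;> rcases eq_or_ne z y with rfl | h2 <;>
    rcases eq_or_ne z e with rfl | h3 <;> rcases eq_or_ne z f with rfl | h4 <;>
    simp_all

lemma id9b {e f x y : α} {T : Finset α} (he : e ∈ T) (hf : f ∉ T) (hx : x ∈ T) (hxe : x ≠ e)
    (hy : y ∉ T) (hyf : y ≠ f) :
    sw e y T \ sw x y (sw e f T) = {x} := by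
  ext z; simp only [mem_sw, Finset.mem_sdiff, Finset.mem_singleton]
  rcases eq_or_ne z x with rfl | h1 <;> rcases eq_or_ne z y with rfl | h2 <;>
    rcases eq_or_ne z e with rfl | h3 <;> rcases eq_or_ne z f with rfl | h4 <;>
    simp_all

def ExchAx (𝓑 : Finset (Finset α)) : Prop :=
  ∀ A ∈ 𝓑, ∀ B ∈ 𝓑, ∀ a, a ∈ A → a ∉ B → ∃ b, b ∈ B ∧ b ∉ A ∧ sw a b A ∈ 𝓑

def Unif (𝓑 : Finset (Finset α)) : Prop := ∀ A ∈ 𝓑, ∀ B ∈ 𝓑, A.card = B.card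

lemma neighbor {𝓑 : Finset (Finset α)} (hEx : ExchAx 𝓑) (hU : Unif 𝓑) {A B : Finset α}
    (hA : A ∈ 𝓑) (hB : B ∈ 𝓑) (hne : A ≠ B) :
    ∃ a b, a ∈ A ∧ a ∉ B ∧ b ∈ B ∧ b ∉ A ∧ sw a b A ∈ 𝓑 := by
  have hex : ∃ a, a ∈ A ∧ a ∉ B := by
    by_contra hcon
    push_neg at hcon
    exact hne (Finset.eq_of_subset_of_card_le (fun x hx => hcon x hx) (le_of_eq (hU B hB A hA)))
  obtain ⟨a, haA, haB⟩ := hex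
  obtain ⟨b, hbB, hbA, hsw⟩ := hEx A hA B hB a haA haB
  exact ⟨a, b, haA, haB, hbB, hbA, hsw⟩

lemma ham_path : ∀ (n : ℕ) (𝓑 : Finset (Finset α)) (E₀ : Finset α), E₀.card ≤ n →
    (∀ A ∈ 𝓑, ∀ B ∈ 𝓑, A \ B ⊆ E₀) → ExchAx 𝓑 → Unif 𝓑 →
    ∀ T T' : Finset α, T ∈ 𝓑 → T' ∈ 𝓑 → EStep T T' →
    ∃ L : List (Finset α), L.Nodup ∧ (∀ S, S ∈ L ↔ S ∈ 𝓑) ∧ L.Chain' EStep ∧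
      L.head? = some T' ∧ L.getLast? = some T := by
  intro n
  induction n with
  | zero =>
    intro 𝓑 E₀ hE hsub hEx hU T T' hT hT' hstep
    exfalso
    have hE0 : E₀ = ∅ := Finset.card_eq_zero.mp (Nat.le_zero.mp hE)
    have hTT' : T = T' := by
      apply Finset.Subset.antisymm
      · intro a ha
        by_contra ha'
        have := hsub T hT T' hT' (Finset.mem_sdiff.mpr ⟨ha, ha'⟩)
        rw [hE0] at this
        exact absurd this (Finset.notMem_empty a)
      · intro a ha
        by_contra ha'
        have := hsub T' hT' T hT (Finset.mem_sdiff.mpr ⟨ha, ha'⟩)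
        rw [hE0] at this
        exact absurd this (Finset.notMem_empty a)
    rw [hTT'] at hstep
    unfold EStep at hstep
    rw [symmDiff_self] at hstep
    simp at hstep
  | succ n IH =>
    intro 𝓑 E₀ hE hsub hEx hU T T' hT hT' hstep
    obtain ⟨e, f, heT, heT', hfT', hfT, hT'eq⟩ := estep_decomp (hU T hT T' hT') hstep
    classical
    set Bf := 𝓑.filter (fun A => f ∈ A) with hBfdef
    set Bnf := 𝓑.filter (fun A => f ∉ A) with hBnfdef
    have memBf : ∀ {S : Finset α}, S ∈ Bf ↔ S ∈ 𝓑 ∧ f ∈ S := by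
      intro S; simp [hBfdef, Finset.mem_filter]
    have memBnf : ∀ {S : Finset α}, S ∈ Bnf ↔ S ∈ 𝓑 ∧ f ∉ S := by
      intro S; simp [hBnfdef, Finset.mem_filter]
    have hpart : ∀ S ∈ 𝓑, S ∈ Bf ∨ S ∈ Bnf := by
      intro S hS
      by_cases hf : f ∈ S
      · exact Or.inl (memBf.mpr ⟨hS, hf⟩)
      · exact Or.inr (memBnf.mpr ⟨hS, hf⟩)
    have hT'Bf : T' ∈ Bf := memBf.mpr ⟨hT', hfT'⟩
    have hTBnf : T ∈ Bnf := memBnf.mpr ⟨hT, hfT⟩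
    have hExf : ExchAx Bf := by
      intro A hA B hB a haA haB
      obtain ⟨hA1, hA2⟩ := memBf.mp hA
      obtain ⟨hB1, hB2⟩ := memBf.mp hB
      obtain ⟨b, hbB, hbA, hswb⟩ := hEx A hA1 B hB1 a haA haB
      refine ⟨b, hbB, hbA, memBf.mpr ⟨hswb, ?_⟩⟩
      exact mem_sw.mpr (Or.inr ⟨hA2, fun h => haB (h ▸ hB2)⟩)
    have hExnf : ExchAx Bnf := by
      intro A hA B hB a haA haB
      obtain ⟨hA1, hA2⟩ := memBnf.mp hA
      obtain ⟨hB1, hB2⟩ := memBnf.mp hB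
      obtain ⟨b, hbB, hbA, hswb⟩ := hEx A hA1 B hB1 a haA haB
      refine ⟨b, hbB, hbA, memBnf.mpr ⟨hswb, ?_⟩⟩
      rw [mem_sw]
      rintro (h | ⟨h, -⟩)
      · exact hB2 (h ▸ hbB)
      · exact hA2 h
    have hUf : Unif Bf := fun A hA B hB => hU A (memBf.mp hA).1 B (memBf.mp hB).1
    have hUnf : Unif Bnf := fun A hA B hB => hU A (memBnf.mp hA).1 B (memBnf.mp hB).1
    have hfE₀ : f ∈ E₀ := hsub T' hT' T hT (Finset.mem_sdiff.mpr ⟨hfT', hfT⟩)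
    have hE' : (E₀.erase f).card ≤ n := by
      rw [Finset.card_erase_of_mem hfE₀]; omega
    have hsubf : ∀ A ∈ Bf, ∀ B ∈ Bf, A \ B ⊆ E₀.erase f := by
      intro A hA B hB x hx
      rw [Finset.mem_erase]
      obtain ⟨hxA, hxB⟩ := Finset.mem_sdiff.mp hx
      exact ⟨fun h => hxB (h ▸ (memBf.mp hB).2),
        hsub A (memBf.mp hA).1 B (memBf.mp hB).1 hx⟩
    have hsubnf : ∀ A ∈ Bnf, ∀ B ∈ Bnf, A \ B ⊆ E₀.erase f := by
      intro A hA B hB x hx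
      rw [Finset.mem_erase]
      obtain ⟨hxA, hxB⟩ := Finset.mem_sdiff.mp hx
      exact ⟨fun h => (memBnf.mp hA).2 (h ▸ hxA),
        hsub A (memBnf.mp hA).1 B (memBnf.mp hB).1 hx⟩
    by_cases h2 : Bnf = {T}
    · by_cases h1 : Bf = {T'}
      · -- Case 1 : exactly the two bases T, T'
        have hTT' : T' ≠ T := fun h => heT' (h ▸ heT)
        refine ⟨[T', T], by simp [hTT'], ?_, List.isChain_pair.mpr hstep.symm, rfl, rfl⟩
        intro S
        constructor
        · intro hS
          rcases List.mem_cons.mp hS with rfl | hS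
          · exact hT'
          · rcases List.mem_singleton.mp hS with rfl
            exact hT
        · intro hS
          rcases hpart S hS with h | h
          · rw [h1] at h
            exact List.mem_cons.mpr (Or.inl (Finset.mem_singleton.mp h))
          · rw [h2] at h
            exact List.mem_cons.mpr (Or.inr (by
              simp [Finset.mem_singleton.mp h]))
      · -- Case 3 : Bnf = {T}, Bf has another element
        obtain ⟨Y₀, hY₀Bf, hY₀T'⟩ : ∃ Y₀ ∈ Bf, Y₀ ≠ T' := by
          by_contra hcon
          push_neg at hcon
          exact h1 (Finset.eq_singleton_iff_unique_mem.mpr ⟨hT'Bf, hcon⟩)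
        obtain ⟨x, y, hxT', hxY₀, hyY₀, hyT', hYBf⟩ :=
          neighbor hExf hUf hT'Bf hY₀Bf (Ne.symm hY₀T')
        have hxf : x ≠ f := fun h => hxY₀ (h ▸ (memBf.mp hY₀Bf).2)
        have hyf : y ≠ f := fun h => hyT' (h ▸ hfT')
        have hxTe : x ∈ T ∧ x ≠ e := by
          rcases mem_sw.mp (hT'eq ▸ hxT') with h | h
          · exact absurd h hxf
          · exact h
        by_cases hye : y = e
        · subst hye
          have hYeq : sw x y T' = sw x f T := by rw [hT'eq]; exact id3 heT hfT hxTe.1 hxTe.2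
          have hSBf : sw x f T ∈ Bf := hYeq ▸ hYBf
          have hT'S : EStep T' (sw x f T) := by
            rw [hT'eq]
            exact estep_sw_sw_rem heT hxTe.1 (Ne.symm hxTe.2) hfT
          have hST : EStep (sw x f T) T := (estep_sw hxTe.1 hfT).symm
          obtain ⟨L₁, hN₁, hM₁, hC₁, hH₁, hL₁⟩ :=
            IH Bf (E₀.erase f) hE' hsubf hExf hUf (sw x f T) T' hSBf hT'Bf hT'S.symm
          have hL₁ne : L₁ ≠ [] := by
            intro h; rw [h] at hH₁; simp at hH₁
          have hTL₁ : T ∉ L₁ := fun h => hfT ((memBf.mp ((hM₁ T).mp h)).2)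
          refine ⟨L₁ ++ [T], ?_, ?_, ?_, ?_, ?_⟩
          · rw [List.nodup_append']
            exact ⟨hN₁, List.nodup_singleton T, by
              intro a ha hb
              rw [List.mem_singleton] at hb
              subst hb
              exact hTL₁ ha⟩
          · intro S
            rw [List.mem_append, List.mem_singleton]
            constructor
            · rintro (h | rfl)
              · exact (memBf.mp ((hM₁ S).mp h)).1
              · exact hT
            · intro hS
              rcases hpart S hS with h | h
              · exact Or.inl ((hM₁ S).mpr h)
              · rw [h2] at h
                exact Or.inr (Finset.mem_singleton.mp h)
          · refine List.IsChain.append hC₁ (List.isChain_singleton T) ?_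
            intro a ha b hb
            rw [hL₁, Option.mem_def, Option.some.injEq] at ha
            simp only [List.head?_cons, Option.mem_def, Option.some.injEq] at hb
            subst ha; subst hb
            exact hST
          · rw [List.head?_append_of_ne_nil _ hL₁ne]; exact hH₁
          · exact List.getLast?_concat
        · -- y ≠ e : impossible
          exfalso
          have hyT : y ∉ T := fun h => hyT' (by rw [hT'eq]; exact mem_sw.mpr (Or.inr ⟨h, hye⟩))
          have hfY : f ∈ sw x y T' := mem_sw.mpr (Or.inr ⟨hfT', fun h => hxf h.symm⟩)
          obtain ⟨b, hbT, hbY, hZ𝓑⟩ := hEx (sw x y T') (memBf.mp hYBf).1 T hT f hfY hfT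
          have hfb : f ≠ b := fun h => hfT (h ▸ hbT)
          have hfZ : f ∉ sw f b (sw x y T') := by
            rw [mem_sw]
            rintro (h | ⟨-, h⟩)
            · exact hfb h
            · exact h rfl
          have hZBnf : sw f b (sw x y T') ∈ Bnf := memBnf.mpr ⟨hZ𝓑, hfZ⟩
          rw [h2] at hZBnf
          have hZT := Finset.mem_singleton.mp hZBnf
          have hyZ : y ∈ sw f b (sw x y T') :=
            mem_sw.mpr (Or.inr ⟨mem_sw.mpr (Or.inl rfl), hyf⟩)
          rw [hZT] at hyZ
          exact hyT hyZ
    · -- Bnf ≠ {T}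
      obtain ⟨X₀, hX₀Bnf, hX₀T⟩ : ∃ X₀ ∈ Bnf, X₀ ≠ T := by
        by_contra hcon
        push_neg at hcon
        exact h2 (Finset.eq_singleton_iff_unique_mem.mpr ⟨hTBnf, hcon⟩)
      obtain ⟨p, q, hpT, hpX₀, hqX₀, hqT, hWBnf⟩ :=
        neighbor hExnf hUnf hTBnf hX₀Bnf (Ne.symm hX₀T)
      have hqf : q ≠ f := fun h => (memBnf.mp hX₀Bnf).2 (h ▸ hqX₀)
      by_cases h1 : Bf = {T'}
      · -- Case 2
        have hR : ∃ q', q' ∉ T ∧ q' ≠ f ∧ sw e q' T ∈ 𝓑 := by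
          by_cases hpe : p = e
          · exact ⟨q, hqT, hqf, by rw [← hpe]; exact (memBnf.mp hWBnf).1⟩
          · have heW : e ∈ sw p q T := mem_sw.mpr (Or.inr ⟨heT, fun h => hpe h.symm⟩)
            obtain ⟨b, hbT', hbW, hZ𝓑⟩ :=
              hEx (sw p q T) (memBnf.mp hWBnf).1 T' hT' e heW heT'
            rcases mem_sw.mp (hT'eq ▸ hbT') with hbf | ⟨hbT, hbe⟩
            · exfalso
              subst hbf
              have hZBf : sw e b (sw p q T) ∈ Bf :=
                memBf.mpr ⟨hZ𝓑, mem_sw.mpr (Or.inl rfl)⟩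
              rw [h1] at hZBf
              have hZT' := Finset.mem_singleton.mp hZBf
              have hqZ : q ∈ sw e b (sw p q T) :=
                mem_sw.mpr (Or.inr ⟨mem_sw.mpr (Or.inl rfl), fun h => hqT (h ▸ heT)⟩)
              rw [hZT', hT'eq, mem_sw] at hqZ
              rcases hqZ with h | ⟨h, -⟩
              · exact hqf h
              · exact hqT h
            · have hbp : b = p := by
                by_contra hbp
                exact hbW (mem_sw.mpr (Or.inr ⟨hbT, hbp⟩))
              subst hbp
              refine ⟨q, hqT, hqf, ?_⟩
              rw [← id1 heT hpT (fun h => hpe h) hqT]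
              exact hZ𝓑
        obtain ⟨q', hq'T, hq'f, hR𝓑⟩ := hR
        have hRBnf : sw e q' T ∈ Bnf := by
          refine memBnf.mpr ⟨hR𝓑, ?_⟩
          rw [mem_sw]
          rintro (h | ⟨h, -⟩)
          · exact hq'f h.symm
          · exact hfT h
        have hTR : EStep T (sw e q' T) := estep_sw heT hq'T
        have hT'R : EStep T' (sw e q' T) := by
          rw [hT'eq]
          exact estep_sw_sw_ins heT hfT hq'T (fun h => hq'f h.symm)
        obtain ⟨L₂, hN₂, hM₂, hC₂, hH₂, hL₂⟩ :=
          IH Bnf (E₀.erase f) hE' hsubnf hExnf hUnf T (sw e q' T) hTBnf hRBnf hTR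
        have hT'L₂ : T' ∉ L₂ := fun h => (memBnf.mp ((hM₂ T').mp h)).2 hfT'
        refine ⟨T' :: L₂, List.nodup_cons.mpr ⟨hT'L₂, hN₂⟩, ?_, ?_, rfl, ?_⟩
        · intro S
          rw [List.mem_cons]
          constructor
          · rintro (rfl | h)
            · exact hT'
            · exact (memBnf.mp ((hM₂ S).mp h)).1
          · intro hS
            rcases hpart S hS with h | h
            · rw [h1] at h
              exact Or.inl (Finset.mem_singleton.mp h)
            · exact Or.inr ((hM₂ S).mpr h)
        · rw [show List.Chain' EStep (T' :: L₂) ↔ _ from List.isChain_cons]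
          refine ⟨?_, hC₂⟩
          intro y hy
          rw [hH₂, Option.mem_def, Option.some.injEq] at hy
          subst hy
          exact hT'R
        · cases L₂ with
          | nil => simp at hH₂
          | cons a l => rw [List.getLast?_cons_cons]; exact hL₂
      · -- Case 4
        have key : ∃ S R, S ∈ Bf ∧ EStep S T' ∧ R ∈ Bnf ∧ EStep T R ∧ EStep S R := by
          by_cases hgood : ∃ p' q', p' ∈ T ∧ p' ≠ e ∧ q' ∉ T ∧ q' ≠ f ∧ sw p' q' T ∈ 𝓑
          · obtain ⟨p', q', hp', hp'e, hq', hq'f, hW𝓑⟩ := hgood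
            have hR₀Bnf : sw p' q' T ∈ Bnf := by
              refine memBnf.mpr ⟨hW𝓑, ?_⟩
              rw [mem_sw]
              rintro (h | ⟨h, -⟩)
              · exact hq'f h.symm
              · exact hfT h
            have hp'T' : p' ∈ T' := by
              rw [hT'eq]; exact mem_sw.mpr (Or.inr ⟨hp', hp'e⟩)
            have hp'R₀ : p' ∉ sw p' q' T := by
              rw [mem_sw]
              rintro (h | ⟨-, h⟩)
              · exact hq' (h ▸ hp')
              · exact h rfl
            obtain ⟨b, hbR₀, hbT', hS𝓑⟩ := hEx T' hT' (sw p' q' T) hW𝓑 p' hp'T' hp'R₀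
            have hfS : f ∈ sw p' b T' :=
              mem_sw.mpr (Or.inr ⟨hfT', fun h => hfT (h ▸ hp')⟩)
            have hSBf : sw p' b T' ∈ Bf := memBf.mpr ⟨hS𝓑, hfS⟩
            have hT'S : EStep T' (sw p' b T') := estep_sw hp'T' hbT'
            have hSR : EStep (sw p' b T') (sw p' q' T) := by
              rcases mem_sw.mp hbR₀ with hbq | ⟨hbT, hbp⟩
              · subst hbq
                rw [hT'eq, id5 heT hp' hp'e hfT hq' hq'f]
                have he' : e ∈ sw p' b T := mem_sw.mpr (Or.inr ⟨heT, fun h => hp'e h.symm⟩)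
                have hf' : f ∉ sw p' b T := (memBnf.mp hR₀Bnf).2
                exact (estep_sw he' hf').symm
              · have hbe : b = e := by
                  by_contra hbe
                  exact hbT' (hT'eq ▸ mem_sw.mpr (Or.inr ⟨hbT, hbe⟩))
                subst hbe
                rw [hT'eq, id3 heT hfT hp' hp'e]
                exact estep_sw_sw_ins hp' hfT hq' (Ne.symm hq'f)
            exact ⟨sw p' b T', sw p' q' T, hSBf, hT'S.symm, hR₀Bnf, estep_sw hp' hq', hSR⟩
          · have hpe : p = e := by
              by_contra hpe
              exact hgood ⟨p, q, hpT, hpe, hqT, hqf, (memBnf.mp hWBnf).1⟩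
            have hWB : sw e q T ∈ Bnf := by rw [← hpe]; exact hWBnf
            obtain ⟨Y₀, hY₀Bf, hY₀T'⟩ : ∃ Y₀ ∈ Bf, Y₀ ≠ T' := by
              by_contra hcon
              push_neg at hcon
              exact h1 (Finset.eq_singleton_iff_unique_mem.mpr ⟨hT'Bf, hcon⟩)
            obtain ⟨x, y, hxT', hxY₀, hyY₀, hyT', hYBf⟩ :=
              neighbor hExf hUf hT'Bf hY₀Bf (Ne.symm hY₀T')
            have hxf : x ≠ f := fun h => hxY₀ (h ▸ (memBf.mp hY₀Bf).2)
            have hyf : y ≠ f := fun h => hyT' (h ▸ hfT')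
            have hxTe : x ∈ T ∧ x ≠ e := by
              rcases mem_sw.mp (hT'eq ▸ hxT') with h | h
              · exact absurd h hxf
              · exact h
            by_cases hye : y = e
            · -- shape P
              have hYeq : sw x y T' = sw x f T := by
                rw [hye, hT'eq]; exact id3 heT hfT hxTe.1 hxTe.2
              have hY𝓑 : sw x f T ∈ 𝓑 := hYeq ▸ (memBf.mp hYBf).1
              have hxR₀ : x ∈ sw e q T := mem_sw.mpr (Or.inr ⟨hxTe.1, hxTe.2⟩)
              have hxY : x ∉ sw x f T := by
                rw [mem_sw]
                rintro (h | ⟨-, h⟩)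
                · exact hxf h
                · exact h rfl
              obtain ⟨b, hbY, hbR₀, hZ𝓑⟩ :=
                hEx (sw e q T) (memBnf.mp hWB).1 (sw x f T) hY𝓑 x hxR₀ hxY
              rcases mem_sw.mp hbY with hbf | ⟨hbT, hbx⟩
              · rw [hbf] at hZ𝓑
                have hfZ : f ∈ sw x f (sw e q T) := mem_sw.mpr (Or.inl rfl)
                have hZBf : sw x f (sw e q T) ∈ Bf := memBf.mpr ⟨hZ𝓑, hfZ⟩
                have hT'Z : EStep T' (sw x f (sw e q T)) := by
                  rw [hT'eq]
                  exact estep_of_sdiff (id6a heT hfT hxTe.1 hxTe.2 hqT hqf)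
                    (id6b heT hfT hxTe.1 hxTe.2 hqT hqf)
                have hZR₀ : EStep (sw x f (sw e q T)) (sw e q T) :=
                  (estep_sw hxR₀ (memBnf.mp hWB).2).symm
                exact ⟨sw x f (sw e q T), sw e q T, hZBf, hT'Z.symm, hWB,
                  estep_sw heT hqT, hZR₀⟩
              · exfalso
                have hbe : b = e := by
                  by_contra hbe
                  exact hbR₀ (mem_sw.mpr (Or.inr ⟨hbT, hbe⟩))
                subst hbe
                have hgw : sw x q T ∈ 𝓑 := by
                  rw [← id3 heT hqT hxTe.1 hxTe.2]
                  exact hZ𝓑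
                exact hgood ⟨x, q, hxTe.1, hxTe.2, hqT, hqf, hgw⟩
            · -- mixed shape
              have hyT : y ∉ T := fun h =>
                hyT' (by rw [hT'eq]; exact mem_sw.mpr (Or.inr ⟨h, hye⟩))
              have hfY : f ∈ sw x y T' := mem_sw.mpr (Or.inr ⟨hfT', fun h => hxf h.symm⟩)
              obtain ⟨b, hbT, hbY, hZ𝓑⟩ :=
                hEx (sw x y T') (memBf.mp hYBf).1 T hT f hfY hfT
              have hbor : b = e ∨ b = x := by
                by_contra hcon
                push_neg at hcon
                apply hbY
                rw [mem_sw]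
                refine Or.inr ⟨?_, hcon.2⟩
                rw [hT'eq]
                exact mem_sw.mpr (Or.inr ⟨hbT, hcon.1⟩)
              rcases hbor with hbe | hbx
              · exfalso
                subst hbe
                have hgw : sw x y T ∈ 𝓑 := by
                  have hz := hZ𝓑
                  rw [hT'eq, id7 heT hfT hxTe.1 hxTe.2 hyT hyf hye] at hz
                  exact hz
                exact hgood ⟨x, y, hxTe.1, hxTe.2, hyT, hyf, hgw⟩
              · rw [hbx] at hZ𝓑
                have hZeq : sw f x (sw x y T') = sw e y T := by
                  rw [hT'eq]; exact id8 heT hfT hxTe.1 hxTe.2 hyT hyf hye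
                have hR𝓑 : sw e y T ∈ 𝓑 := hZeq ▸ hZ𝓑
                have hRBnf : sw e y T ∈ Bnf := by
                  refine memBnf.mpr ⟨hR𝓑, ?_⟩
                  rw [mem_sw]
                  rintro (h | ⟨h, -⟩)
                  · exact hyf h.symm
                  · exact hfT h
                have hT'Y : EStep T' (sw x y T') := estep_sw hxT' hyT'
                have hYR : EStep (sw x y T') (sw e y T) := by
                  rw [hT'eq]
                  exact estep_of_sdiff (id9a heT hfT hxTe.1 hxTe.2 hyT hyf)
                    (id9b heT hfT hxTe.1 hxTe.2 hyT hyf)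
                exact ⟨sw x y T', sw e y T, hYBf, hT'Y.symm, hRBnf,
                  estep_sw heT hyT, hYR⟩
        obtain ⟨S, R, hSBf, hST', hRBnf, hTR, hSR⟩ := key
        obtain ⟨L₁, hN₁, hM₁, hC₁, hH₁, hL₁⟩ :=
          IH Bf (E₀.erase f) hE' hsubf hExf hUf S T' hSBf hT'Bf hST'
        obtain ⟨L₂, hN₂, hM₂, hC₂, hH₂, hL₂⟩ :=
          IH Bnf (E₀.erase f) hE' hsubnf hExnf hUnf T R hTBnf hRBnf hTR
        have hL₁ne : L₁ ≠ [] := by intro h; rw [h] at hH₁; simp at hH₁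
        have hL₂ne : L₂ ≠ [] := by intro h; rw [h] at hH₂; simp at hH₂
        refine ⟨L₁ ++ L₂, ?_, ?_, ?_, ?_, ?_⟩
        · rw [List.nodup_append']
          refine ⟨hN₁, hN₂, ?_⟩
          intro a ha hb
          exact (memBnf.mp ((hM₂ a).mp hb)).2 ((memBf.mp ((hM₁ a).mp ha)).2)
        · intro S'
          rw [List.mem_append]
          constructor
          · rintro (h | h)
            · exact (memBf.mp ((hM₁ S').mp h)).1
            · exact (memBnf.mp ((hM₂ S').mp h)).1
          · intro hS'
            rcases hpart S' hS' with h | h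
            · exact Or.inl ((hM₁ S').mpr h)
            · exact Or.inr ((hM₂ S').mpr h)
        · refine List.IsChain.append hC₁ hC₂ ?_
          intro a ha b hb
          rw [hL₁, Option.mem_def, Option.some.injEq] at ha
          rw [hH₂, Option.mem_def, Option.some.injEq] at hb
          subst ha; subst hb
          exact hSR
        · rw [List.head?_append_of_ne_nil _ hL₁ne]; exact hH₁
        · rw [List.getLast?_append_of_ne_nil _ hL₂ne]; exact hL₂

end Abstract

section Graph

open SimpleGraph

variable {V : Type*} [Fintype V] [DecidableEq V] {G : SimpleGraph V}

lemma edgeSet_of_subset {T : Finset (Sym2 V)} (hsub : ↑T ⊆ G.edgeSet) :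
    (SimpleGraph.fromEdgeSet (↑T : Set (Sym2 V))).edgeSet = ↑T := by
  rw [SimpleGraph.edgeSet_fromEdgeSet]
  ext e
  simp only [Set.mem_diff, Set.mem_setOf_eq, Finset.mem_coe, and_iff_left_iff_imp]
  intro he
  exact G.not_isDiag_of_mem_edgeSet (hsub he)

lemma spanningTree_card {T : Finset (Sym2 V)} (hT : IsSpanningTree G T) :
    T.card + 1 = Fintype.card V := by
  classical
  have htree : (SimpleGraph.fromEdgeSet (↑T : Set (Sym2 V))).IsTree := ⟨hT.2.1, hT.2.2⟩
  haveI : Fintype (SimpleGraph.fromEdgeSet (↑T : Set (Sym2 V))).edgeSet :=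
    (Set.toFinite _).fintype
  have h1 : (SimpleGraph.fromEdgeSet (↑T : Set (Sym2 V))).edgeFinset = T :=
    Finset.coe_injective (by rw [SimpleGraph.coe_edgeFinset, edgeSet_of_subset hT.1])
  have h2 := htree.card_edgeFinset
  rwa [h1] at h2

/-- The exchange axiom for spanning trees. -/
lemma spanningTree_exchange_s14 (hG : G.Connected) {T₁ T₂ : Finset (Sym2 V)}
    (h₁ : IsSpanningTree G T₁) (h₂ : IsSpanningTree G T₂) {e : Sym2 V}
    (he₁ : e ∈ T₁) (he₂ : e ∉ T₂) :
    ∃ f, f ∈ T₂ ∧ f ∉ T₁ ∧ IsSpanningTree G (sw e f T₁) := by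
  induction e using Sym2.ind with
  | _ u v =>
  have huv : G.Adj u v := (SimpleGraph.mem_edgeSet G).mp (h₁.1 he₁)
  have hne : u ≠ v := huv.ne
  set H : SimpleGraph V := SimpleGraph.fromEdgeSet (↑(T₁.erase s(u, v)) : Set (Sym2 V)) with hH
  set H₁ : SimpleGraph V := SimpleGraph.fromEdgeSet (↑T₁ : Set (Sym2 V)) with hH₁
  have hHle : H ≤ H₁ :=
    SimpleGraph.fromEdgeSet_mono (Finset.coe_subset.mpr (Finset.erase_subset _ _))
  -- u and v are not reachable in H
  have hbridge : ¬ H.Reachable u v := by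
    have hadj : H₁.Adj u v :=
      (SimpleGraph.fromEdgeSet_adj _).mpr ⟨Finset.mem_coe.mpr he₁, hne⟩
    have hbr : H₁.IsBridge s(u, v) :=
      (SimpleGraph.isAcyclic_iff_forall_adj_isBridge.mp h₁.2.2) hadj
    have hnr := SimpleGraph.isBridge_iff.mp hbr
    intro hr
    apply hnr
    refine hr.mono ?_
    intro a b hab
    rw [hH, SimpleGraph.fromEdgeSet_adj] at hab
    obtain ⟨hmem, habne⟩ := hab
    rw [Finset.mem_coe, Finset.mem_erase] at hmem
    rw [SimpleGraph.deleteEdges, SimpleGraph.sdiff_adj]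
    constructor
    · exact (SimpleGraph.fromEdgeSet_adj _).mpr ⟨Finset.mem_coe.mpr hmem.2, habne⟩
    · rw [SimpleGraph.fromEdgeSet_adj]
      rintro ⟨hss, -⟩
      exact hmem.1 hss
  -- every vertex is H-reachable from u or from v
  have aux : ∀ {a b : V}, H₁.Walk a b → (H.Reachable u a ∨ H.Reachable v a) →
      (H.Reachable u b ∨ H.Reachable v b) := by
    intro a b w
    induction w with
    | nil => exact id
    | @cons a c b h p ih =>
      intro ha
      apply ih
      by_cases hc : s(a, c) = s(u, v)
      · rcases Sym2.eq_iff.mp hc with ⟨rfl, rfl⟩ | ⟨rfl, rfl⟩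
        · exact Or.inr (SimpleGraph.Reachable.refl _)
        · exact Or.inl (SimpleGraph.Reachable.refl _)
      · have hmem : s(a, c) ∈ ↑T₁ := Finset.mem_coe.mp ?memt
        case memt =>
          have := ((SimpleGraph.fromEdgeSet_adj _).mp h).1
          exact this
        have hHadj : H.Adj a c := by
          rw [hH, SimpleGraph.fromEdgeSet_adj]
          exact ⟨Finset.mem_coe.mpr (Finset.mem_erase.mpr ⟨hc, hmem⟩), h.ne⟩
        rcases ha with h' | h'
        · exact Or.inl (h'.trans hHadj.reachable)
        · exact Or.inr (h'.trans hHadj.reachable)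
  have claim2 : ∀ z : V, H.Reachable u z ∨ H.Reachable v z := by
    intro z
    obtain ⟨w⟩ := h₁.2.1.preconnected u z
    exact aux w (Or.inl (SimpleGraph.Reachable.refl u))
  -- find a crossing edge of T₂
  have aux2 : ∀ {a b : V}, (SimpleGraph.fromEdgeSet (↑T₂ : Set (Sym2 V))).Walk a b →
      H.Reachable u a → ¬ H.Reachable u b →
      ∃ x y : V, s(x, y) ∈ T₂ ∧ x ≠ y ∧ H.Reachable u x ∧ ¬ H.Reachable u y := by
    intro a b w
    induction w with
    | nil => intro h1 h2; exact absurd h1 h2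
    | @cons a c b h p ih =>
      intro ha hb
      by_cases hc : H.Reachable u c
      · exact ih hc hb
      · exact ⟨a, c, Finset.mem_coe.mp ((SimpleGraph.fromEdgeSet_adj _).mp h).1, h.ne, ha, hc⟩
  obtain ⟨w₂⟩ := h₂.2.1.preconnected u v
  obtain ⟨x, y, hfT₂, hxy, hPx, hPy⟩ :=
    aux2 w₂ (SimpleGraph.Reachable.refl u) hbridge
  -- the exchange edge
  have hfne : s(x, y) ≠ s(u, v) := by
    intro h
    exact he₂ (h ▸ hfT₂)
  have hfT₁ : s(x, y) ∉ T₁ := by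
    intro hmem
    have hHadj : H.Adj x y := by
      rw [hH, SimpleGraph.fromEdgeSet_adj]
      exact ⟨Finset.mem_coe.mpr (Finset.mem_erase.mpr ⟨hfne, hmem⟩), hxy⟩
    exact hPy (hPx.trans hHadj.reachable)
  refine ⟨s(x, y), hfT₂, hfT₁, ?_, ?_, ?_⟩
  · -- subset of edge set
    intro z hz
    rw [Finset.mem_coe, mem_sw] at hz
    rcases hz with rfl | ⟨hz, -⟩
    · exact h₂.1 hfT₂
    · exact h₁.1 hz
  · -- connected
    have hHle₃ : H ≤ SimpleGraph.fromEdgeSet (↑(sw s(u, v) s(x, y) T₁) : Set (Sym2 V)) := by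
      apply SimpleGraph.fromEdgeSet_mono
      rw [Finset.coe_subset]
      exact Finset.subset_insert _ _
    have hadj₃ : (SimpleGraph.fromEdgeSet (↑(sw s(u, v) s(x, y) T₁) : Set (Sym2 V))).Adj x y := by
      rw [SimpleGraph.fromEdgeSet_adj]
      exact ⟨Finset.mem_coe.mpr (mem_sw.mpr (Or.inl rfl)), hxy⟩
    have hvy : H.Reachable v y := by
      rcases claim2 y with h' | h'
      · exact absurd h' hPy
      · exact h'
    have huv₃ : (SimpleGraph.fromEdgeSet (↑(sw s(u, v) s(x, y) T₁) : Set (Sym2 V))).Reachable u v :=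
      ((hPx.mono hHle₃).trans hadj₃.reachable).trans (hvy.mono hHle₃).symm
    have hallu : ∀ z : V, (SimpleGraph.fromEdgeSet
        (↑(sw s(u, v) s(x, y) T₁) : Set (Sym2 V))).Reachable u z := by
      intro z
      rcases claim2 z with h' | h'
      · exact h'.mono hHle₃
      · exact huv₃.trans (h'.mono hHle₃)
    exact (SimpleGraph.connected_iff_exists_forall_reachable _).mpr ⟨u, hallu⟩
  · -- acyclic
    have hHac : H.IsAcyclic := by
      intro w' c hc
      have hsub : ∀ e' ∈ c.edges, e' ∈ H₁.edgeSet := fun e' he' =>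
        (SimpleGraph.edgeSet_mono hHle) (c.edges_subset_edgeSet he')
      exact h₁.2.2 (c.transfer H₁ hsub) (hc.transfer hsub)
    have hHnr : ¬ H.Reachable x y := fun hr => hPy (hPx.trans hr)
    have heq : SimpleGraph.fromEdgeSet (↑(sw s(u, v) s(x, y) T₁) : Set (Sym2 V)) =
        H ⊔ SimpleGraph.fromEdgeSet {s(x, y)} := by
      ext a b
      rw [SimpleGraph.fromEdgeSet_adj, SimpleGraph.sup_adj, SimpleGraph.fromEdgeSet_adj,
        SimpleGraph.fromEdgeSet_adj]
      constructor
      · rintro ⟨hmem, habne⟩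
        rw [Finset.mem_coe, mem_sw] at hmem
        rcases hmem with heq' | ⟨hmem, hne'⟩
        · exact Or.inr ⟨heq', habne⟩
        · exact Or.inl ⟨Finset.mem_coe.mpr (Finset.mem_erase.mpr ⟨hne', hmem⟩), habne⟩
      · rintro (⟨hmem, habne⟩ | ⟨hmem, habne⟩)
        · rw [Finset.mem_coe, Finset.mem_erase] at hmem
          exact ⟨Finset.mem_coe.mpr (mem_sw.mpr (Or.inr ⟨hmem.2, hmem.1⟩)), habne⟩
        · rw [Set.mem_singleton_iff] at hmem
          exact ⟨Finset.mem_coe.mpr (mem_sw.mpr (Or.inl hmem)), habne⟩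
    rw [heq]
    -- gluing an edge between two components of an acyclic graph
    have hbr : (H ⊔ SimpleGraph.fromEdgeSet {s(x, y)}).IsBridge s(x, y) := by
      rw [SimpleGraph.isBridge_iff]
      · intro hr
        apply hHnr
        refine hr.mono ?_
        intro a b hab
        rw [SimpleGraph.deleteEdges, SimpleGraph.sdiff_adj] at hab
        obtain ⟨h1, h2⟩ := hab
        rcases (SimpleGraph.sup_adj _ _ a b).mp h1 with h' | h'
        · exact h'
        · exact absurd h' h2
    intro w' c hc
    by_cases hmem : s(x, y) ∈ c.edges
    · exact (SimpleGraph.isBridge_iff_adj_and_forall_cycle_notMem (c.edges_subset_edgeSet hmem)).mp hbr c hc hmem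
    · have hsub : ∀ e' ∈ c.edges, e' ∈ H.edgeSet := by
        intro e' he'
        have h1 := c.edges_subset_edgeSet he'
        rw [SimpleGraph.edgeSet_sup] at h1
        rcases h1 with h' | h'
        · exact h'
        · exfalso
          rw [SimpleGraph.edgeSet_fromEdgeSet, Set.mem_diff, Set.mem_singleton_iff] at h'
          exact hmem (h'.1 ▸ he')
      exact hHac (c.transfer H hsub) (hc.transfer hsub)

end Graph


/-- Let `G` be a finite connected simple graph with at least 3 spanning trees, and let
`T, T'` be spanning trees of `G` differing in an edge exchange. Then there is a cyclic
listing of all spanning trees of `G`, each exactly once, in which any two cyclically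
consecutive trees differ in an edge exchange and in which `T` and `T'` appear at
consecutive positions: the spanning tree flip graph of `G` has a Hamilton cycle through
any prescribed edge. -/
theorem flipGraph_hamilton_cycle_through_edge {V : Type*} [Fintype V] [DecidableEq V]
    (G : SimpleGraph V) (hG : G.Connected)
    (hcount : 3 ≤ Nat.card {T : Finset (Sym2 V) // IsSpanningTree G T})
    (T T' : Finset (Sym2 V)) (hT : IsSpanningTree G T) (hT' : IsSpanningTree G T')
    (hTT' : ExchangeStep T T') :
    ∃ L : List (Finset (Sym2 V)),
      L.Nodup ∧
      (∀ S, S ∈ L ↔ IsSpanningTree G S) ∧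
      L.Chain' ExchangeStep ∧
      (∀ a ∈ L.getLast?, ∀ b ∈ L.head?, ExchangeStep a b) ∧
      ∃ (i : ℕ) (hi : i < L.length), L.get ⟨i, hi⟩ = T ∧
        ∃ hj : (i + 1) % L.length < L.length,
          L.get ⟨(i + 1) % L.length, hj⟩ = T' := by
  classical
  set 𝓑 : Finset (Finset (Sym2 V)) := Finset.univ.filter (fun S => IsSpanningTree G S)
    with h𝓑
  have mem𝓑 : ∀ S, S ∈ 𝓑 ↔ IsSpanningTree G S := by
    intro S; simp [h𝓑]
  have hEx : ExchAx 𝓑 := by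
    intro A hA B hB a haA haB
    obtain ⟨f, hf2, hf1, hsp⟩ :=
      spanningTree_exchange_s14 hG ((mem𝓑 A).mp hA) ((mem𝓑 B).mp hB) haA haB
    exact ⟨f, hf2, hf1, (mem𝓑 _).mpr hsp⟩
  have hU : Unif 𝓑 := by
    intro A hA B hB
    have h1 := spanningTree_card ((mem𝓑 A).mp hA)
    have h2 := spanningTree_card ((mem𝓑 B).mp hB)
    omega
  have hstep : EStep T T' := hTT'
  obtain ⟨L, hN, hM, hC, hH, hL⟩ :=
    ham_path (Finset.univ : Finset (Sym2 V)).card 𝓑 Finset.univ le_rfl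
      (fun A _ B _ => Finset.subset_univ _) hEx hU T T'
      ((mem𝓑 T).mpr hT) ((mem𝓑 T').mpr hT') hstep
  have hLne : L ≠ [] := by intro h; rw [h] at hH; simp at hH
  have hlen : 0 < L.length := List.length_pos_iff.mpr hLne
  refine ⟨L, hN, fun S => (hM S).trans (mem𝓑 S), hC, ?_, ?_⟩
  · intro a ha b hb
    rw [hL, Option.mem_def, Option.some.injEq] at ha
    rw [hH, Option.mem_def, Option.some.injEq] at hb
    subst ha; subst hb
    exact hTT'
  · refine ⟨L.length - 1, by omega, ?_, ?_⟩
    · have hgl : L.getLast hLne = T := by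
        have h1 := List.getLast?_eq_getLast hLne
        rw [h1, Option.some.injEq] at hL
        exact hL
      rw [List.getLast_eq_getElem] at hgl
      exact hgl
    · have hmod : (L.length - 1 + 1) % L.length = 0 := by
        have h1 : L.length - 1 + 1 = L.length := Nat.succ_pred_eq_of_pos hlen
        rw [h1, Nat.mod_self]
      rw [hmod]
      refine ⟨hlen, ?_⟩
      rw [List.get_mk_zero]
      have h2 := List.head?_eq_head hLne
      rw [h2, Option.some.injEq] at hH
      exact hH
end
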